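/- arXiv:1108.0481 — 8 statements merged into one kernel-verified Lean document; each statement's English description precedes it below -/
import Mathlib

section
/- Fix S ≥ 2 and T ≥ 2, and let A be the transition-count design matrix of the toric homogeneous Markov chain model without initial parameters (rows indexed by [S]², columns by words in [S]^T, entries counting transitions). An integer vector y = (y_{σ₁σ₂}) ∈ ℤ^{S²} lies in the lattice ℤA generated by the columns of A if and only if the sum of all coordinates of y is divisible by T−1. -/
/-- The number of transitions `p.1 → p.2` in the word `w` of length `T` over `[S]`. -/
def trCount (S T : ℕ) (w : Fin T → Fin S) (p : Fin S × Fin S) : ℕ :=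
  (Finset.univ.filter (fun t : Fin (T - 1) =>
    w ⟨t.1, by have := t.2; omega⟩ = p.1 ∧ w ⟨t.1 + 1, by have := t.2; omega⟩ = p.2)).card

/-- A word has no self-loops (no two consecutive equal letters). -/
def NoLoop (S T : ℕ) (w : Fin T → Fin S) : Prop :=
  ∀ t : Fin (T - 1), w ⟨t.1, by have := t.2; omega⟩ ≠ w ⟨t.1 + 1, by have := t.2; omega⟩

instance (S T : ℕ) : DecidablePred (NoLoop S T) := fun w => by
  unfold NoLoop; infer_instance

lemma col_eq_sum (S T : ℕ) (w : Fin T → Fin S) :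
    (fun p => (trCount S T w p : ℤ)) =
      ∑ t : Fin (T - 1), Pi.single (w ⟨t.1, by have := t.2; omega⟩,
        w ⟨t.1 + 1, by have := t.2; omega⟩) (1 : ℤ) := by
  funext p
  simp only [trCount, Finset.card_filter, Finset.sum_apply, Pi.single_apply]
  push_cast
  refine Finset.sum_congr rfl fun t _ => ?_
  simp [Prod.ext_iff, eq_comm]

lemma col_sum (S T : ℕ) (hT : 1 ≤ T) (w : Fin T → Fin S) :
    ∑ p : Fin S × Fin S, (trCount S T w p : ℤ) = ((T : ℤ) - 1) := by
  have h := col_eq_sum S T w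
  rw [show (∑ p : Fin S × Fin S, (trCount S T w p : ℤ))
      = ∑ p : Fin S × Fin S, (∑ t : Fin (T-1), Pi.single (w ⟨t.1, by have := t.2; omega⟩,
          w ⟨t.1+1, by have := t.2; omega⟩) (1:ℤ)) p
    from Finset.sum_congr rfl fun p _ => congrFun h p]
  simp only [Finset.sum_apply]
  rw [Finset.sum_comm]
  simp [Pi.single_apply, Finset.sum_ite_eq']
  omega

lemma col_const (S n : ℕ) (a : Fin S) :
    (fun p => (trCount S (n+2) (fun _ => a) p : ℤ)) = (n+1 : ℕ) • Pi.single (a,a) (1:ℤ) := by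
  rw [col_eq_sum]
  show (∑ _t : Fin (n+1), (Pi.single (a, a) 1 : Fin S × Fin S → ℤ)) = _
  simp

lemma col_end (S n : ℕ) (a b : Fin S) :
    (fun p => (trCount S (n+2) (fun t => if t.1 = n+1 then b else a) p : ℤ)) =
      (n : ℕ) • Pi.single (a,a) (1:ℤ) + Pi.single (a,b) 1 := by
  rw [col_eq_sum]
  show (∑ t : Fin (n+1), (Pi.single ((if (t.1 : ℕ) = n+1 then b else a),
      (if (t.1 + 1 : ℕ) = n+1 then b else a)) 1 : Fin S × Fin S → ℤ)) = _
  rw [Fin.sum_univ_castSucc]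
  have h1 : ∀ t : Fin n, ((if ((t.castSucc.1 : ℕ) = n+1) then b else a),
      (if ((t.castSucc.1 + 1 : ℕ) = n+1) then b else a)) = (a, a) := by
    intro t
    have := t.2
    rw [if_neg (by simp; omega), if_neg (by simp; omega)]
  have h2 : (((if ((Fin.last n).1 : ℕ) = n+1 then b else a)),
      (if (((Fin.last n).1 + 1 : ℕ) = n+1) then b else a)) = (a, b) := by
    rw [if_neg (by simp), if_pos (by simp)]
  rw [Finset.sum_congr rfl fun t _ => by rw [h1 t], h2]
  simp

lemma col_start (S n : ℕ) (a b : Fin S) :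
    (fun p => (trCount S (n+2) (fun t => if t.1 = 0 then a else b) p : ℤ)) =
      Pi.single (a,b) (1:ℤ) + (n : ℕ) • Pi.single (b,b) 1 := by
  rw [col_eq_sum]
  show (∑ t : Fin (n+1), (Pi.single ((if (t.1 : ℕ) = 0 then a else b),
      (if (t.1 + 1 : ℕ) = 0 then a else b)) 1 : Fin S × Fin S → ℤ)) = _
  rw [Fin.sum_univ_succ]
  have h1 : ∀ t : Fin n, ((if ((t.succ.1 : ℕ) = 0) then a else b),
      (if ((t.succ.1 + 1 : ℕ) = 0) then a else b)) = (b, b) := by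
    intro t
    rw [if_neg (by simp), if_neg (by simp)]
  have h2 : (((if ((0 : Fin (n+1)).1 : ℕ) = 0 then a else b)),
      (if (((0 : Fin (n+1)).1 + 1 : ℕ) = 0) then a else b)) = (a, b) := by
    rw [if_pos (by simp), if_neg (by simp)]
  rw [Finset.sum_congr rfl fun t _ => by rw [h1 t], h2]
  simp

/-- An integer vector lies in the lattice generated by the columns of the THMC design
matrix (without initial parameters) iff its coordinate sum is divisible by `T - 1`. -/
theorem stmt3 (S T : ℕ) (hS : 2 ≤ S) (hT : 2 ≤ T) (y : Fin S × Fin S → ℤ) :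
    y ∈ AddSubgroup.closure
      {v : Fin S × Fin S → ℤ | ∃ w : Fin T → Fin S, v = fun p => (trCount S T w p : ℤ)} ↔
    ((T : ℤ) - 1) ∣ ∑ p : Fin S × Fin S, y p := by
  obtain ⟨n, rfl⟩ : ∃ n, T = n + 2 := ⟨T - 2, by omega⟩
  set L := AddSubgroup.closure
      {v : Fin S × Fin S → ℤ | ∃ w : Fin (n+2) → Fin S,
        v = fun p => (trCount S (n+2) w p : ℤ)} with hLdef
  have hcast : ((↑(n+2) : ℤ) - 1) = (n : ℤ) + 1 := by push_cast; ring
  constructor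
  · intro hy
    let φ : (Fin S × Fin S → ℤ) →+ ℤ :=
      { toFun := fun v => ∑ p : Fin S × Fin S, v p
        map_zero' := by simp
        map_add' := by intro a b; simp [Finset.sum_add_distrib] }
    have key : L ≤ AddSubgroup.comap φ (AddSubgroup.zmultiples ((n : ℤ) + 1)) := by
      rw [hLdef, AddSubgroup.closure_le]
      rintro v ⟨w, rfl⟩
      simp only [SetLike.mem_coe, AddSubgroup.mem_comap, AddSubgroup.mem_zmultiples_iff]
      refine ⟨1, ?_⟩
      have := col_sum S (n+2) (by omega) w
      simp only [φ, AddMonoidHom.coe_mk, ZeroHom.coe_mk]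
      rw [this, hcast]
      simp
    obtain ⟨k, hk⟩ := key hy
    refine ⟨k, ?_⟩
    simp only [φ, AddMonoidHom.coe_mk, ZeroHom.coe_mk, smul_eq_mul] at hk
    rw [hcast, ← hk]
    ring
  · rintro ⟨k, hk⟩
    rw [hcast] at hk
    have memw : ∀ w : Fin (n+2) → Fin S,
        (fun p => (trCount S (n+2) w p : ℤ)) ∈ L :=
      fun w => AddSubgroup.subset_closure ⟨w, rfl⟩
    have hC : ∀ a : Fin S, ((n+1 : ℕ) • Pi.single (a,a) (1:ℤ)) ∈ L := by
      intro a; rw [← col_const]; exact memw _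
    have hE : ∀ a b : Fin S,
        ((n : ℕ) • Pi.single (a,a) (1:ℤ) + Pi.single (a,b) 1) ∈ L := by
      intro a b; rw [← col_end]; exact memw _
    have hF : ∀ a b : Fin S,
        (Pi.single (a,b) (1:ℤ) + (n : ℕ) • Pi.single (b,b) 1) ∈ L := by
      intro a b; rw [← col_start]; exact memw _
    have d1 : ∀ a b : Fin S, Pi.single (a,b) (1:ℤ) - Pi.single (a,a) 1 ∈ L := by
      intro a b
      have h := L.sub_mem (hE a b) (hC a)
      have e : ((n : ℕ) • Pi.single (a,a) (1:ℤ) + Pi.single (a,b) 1)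
          - (n+1 : ℕ) • Pi.single (a,a) (1:ℤ)
          = (Pi.single (a,b) 1 : Fin S × Fin S → ℤ) - Pi.single (a,a) 1 := by
        rw [succ_nsmul]; abel
      rwa [e] at h
    have d2 : ∀ a b : Fin S, Pi.single (a,b) (1:ℤ) - Pi.single (b,b) 1 ∈ L := by
      intro a b
      have h := L.sub_mem (hF a b) (hC b)
      have e : (Pi.single (a,b) (1:ℤ) + (n : ℕ) • Pi.single (b,b) 1)
          - (n+1 : ℕ) • Pi.single (b,b) (1:ℤ)
          = (Pi.single (a,b) 1 : Fin S × Fin S → ℤ) - Pi.single (b,b) 1 := by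
        rw [succ_nsmul]; abel
      rwa [e] at h
    have d3 : ∀ a b : Fin S, Pi.single (a,a) (1:ℤ) - Pi.single (b,b) 1 ∈ L := by
      intro a b
      have h := L.sub_mem (d2 a b) (d1 a b)
      have e : (Pi.single (a,b) (1:ℤ) - Pi.single (b,b) 1)
          - (Pi.single (a,b) (1:ℤ) - Pi.single (a,a) 1)
          = (Pi.single (a,a) 1 : Fin S × Fin S → ℤ) - Pi.single (b,b) 1 := by abel
      rwa [e] at h
    set c : Fin S := ⟨0, by omega⟩ with hc
    have d4 : ∀ p : Fin S × Fin S, Pi.single p (1:ℤ) - Pi.single (c,c) 1 ∈ L := by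
      rintro ⟨a, b⟩
      have h := L.add_mem (d1 a b) (d3 a c)
      have e : (Pi.single (a,b) (1:ℤ) - Pi.single (a,a) 1)
          + (Pi.single (a,a) (1:ℤ) - Pi.single (c,c) 1)
          = (Pi.single (a,b) 1 : Fin S × Fin S → ℤ) - Pi.single (c,c) 1 := by abel
      rwa [e] at h
    have hyid : y = (∑ p : Fin S × Fin S, y p • (Pi.single p (1:ℤ) - Pi.single (c,c) 1))
        + k • ((n+1 : ℕ) • Pi.single (c,c) (1:ℤ)) := by
      funext q
      simp only [Pi.add_apply, Finset.sum_apply, Pi.smul_apply, Pi.sub_apply,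
        Pi.single_apply, smul_eq_mul, mul_sub, Finset.sum_sub_distrib,
        Finset.sum_ite_eq', Finset.mem_univ, if_true, mul_one, ← Finset.sum_mul]
      by_cases hq : q = (c, c)
      · subst hq
        simp only [mul_ite, mul_one, mul_zero, Finset.sum_ite_eq, Finset.mem_univ, if_true, nsmul_eq_mul]
        push_cast
        linarith [hk]
      · simp [hq]
    rw [hyid]
    exact L.add_mem
      (AddSubgroup.sum_mem L fun p _ => AddSubgroup.zsmul_mem L (d4 p) (y p))
      (AddSubgroup.zsmul_mem L (hC c) k)
end

section
/- Fix S ≥ 2 and T ≥ 2, and let A be the transition-count design matrix of the THMC model without initial parameters. The Smith normal form of A is the diagonal matrix diag(1,1,…,1,T−1) of rank S²; that is, there exist unimodular integer matrices U (S²×S²) and V (S^T×S^T) with UAV equal to the S²×S^T matrix with diagonal entries 1,…,1,T−1 and zeros elsewhere. -/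
namespace THMCAux

open Finset

/-- transition map -/
def ftr (S T : ℕ) (w : Fin T → Fin S) (t : Fin (T - 1)) : Fin S × Fin S :=
  (w ⟨t.1, by have := t.2; omega⟩, w ⟨t.1 + 1, by have := t.2; omega⟩)

lemma trCount_eq_card {S T : ℕ} (w : Fin T → Fin S) (p : Fin S × Fin S) :
    trCount S T w p = (univ.filter fun t => ftr S T w t = p).card := by
  unfold trCount
  congr 1
  apply filter_congr
  intro t _
  simp [ftr, Prod.ext_iff]

lemma sum_trCount {S T : ℕ} (w : Fin T → Fin S) :
    ∑ p, trCount S T w p = T - 1 := by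
  simp only [trCount_eq_card]
  rw [← Finset.card_eq_sum_card_fiberwise (f := ftr S T w) (fun t _ => Finset.mem_univ _)]
  simp

lemma sum_trCount_int {S T : ℕ} (hT : 1 ≤ T) (w : Fin T → Fin S) :
    ∑ p, (trCount S T w p : ℤ) = (T : ℤ) - 1 := by
  rw [← Nat.cast_sum, sum_trCount]
  push_cast [hT]
  ring

lemma card_filter_val_eq {k : ℕ} (a : ℕ) (ha : a < k) :
    (univ.filter fun t : Fin k => t.1 = a).card = 1 := by
  rw [show (univ.filter fun t : Fin k => t.1 = a) = univ.filter (fun t => t = ⟨a, ha⟩) from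
    Finset.filter_congr fun t _ => by simp [Fin.ext_iff], Finset.filter_eq']
  simp

lemma card_filter_val_ne {k : ℕ} (hk : 0 < k) :
    (univ.filter fun t : Fin k => ¬ t.1 = 0).card = k - 1 := by
  rw [Finset.filter_not, Finset.card_sdiff_of_subset (Finset.filter_subset _ _)]
  rw [card_filter_val_eq 0 hk]
  simp

lemma card_filter_val_ge2 {k : ℕ} (hk : 2 ≤ k) :
    (univ.filter fun t : Fin k => ¬ t.1 = 0 ∧ ¬ t.1 = 1).card = k - 2 := by
  rw [show (univ.filter fun t : Fin k => ¬ t.1 = 0 ∧ ¬ t.1 = 1)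
        = univ.filter (fun t => ¬ (t.1 = 0 ∨ t.1 = 1)) from
      Finset.filter_congr fun t _ => by simp [not_or],
    Finset.filter_not, Finset.card_sdiff_of_subset (Finset.filter_subset _ _)]
  have h3 : (univ.filter fun t : Fin k => t.1 = 0 ∨ t.1 = 1) = {⟨0, by omega⟩, ⟨1, by omega⟩} := by
    ext t
    simp [Fin.ext_iff]
  rw [h3]
  rw [Finset.card_insert_of_notMem (by simp)]
  simp


/-- The chosen word for a pair. -/
def wrd (S T : ℕ) (hS : 0 < S) (p : Fin S × Fin S) : Fin T → Fin S := fun t =>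
  if t.1 = 0 then p.1 else if p.1 = p.2 then (if t.1 = 1 then p.2 else ⟨0, hS⟩) else p.2

lemma wrd_zero {S T : ℕ} (hS : 0 < S) (p : Fin S × Fin S) (h0 : 0 < T) :
    wrd S T hS p ⟨0, h0⟩ = p.1 := by simp [wrd]

lemma wrd_one {S T : ℕ} (hS : 0 < S) (p : Fin S × Fin S) (h1 : 1 < T) :
    wrd S T hS p ⟨1, h1⟩ = p.2 := by
  by_cases h : p.1 = p.2 <;> simp [wrd, h]

lemma wrd_inj {S T : ℕ} (hS : 0 < S) (hT : 2 ≤ T) : Function.Injective (wrd S T hS) := by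
  intro p q h
  have h0 := congrFun h ⟨0, by omega⟩
  have h1 := congrFun h ⟨1, by omega⟩
  rw [wrd_zero, wrd_zero] at h0
  rw [wrd_one, wrd_one] at h1
  exact Prod.ext h0 h1

lemma ftr_wrd_ne {S T : ℕ} (hS : 0 < S) {a b : Fin S} (hab : a ≠ b) (t : Fin (T - 1)) :
    ftr S T (wrd S T hS (a, b)) t = if t.1 = 0 then (a, b) else (b, b) := by
  simp only [ftr, wrd]
  by_cases h : t.1 = 0 <;> simp [h, hab]

lemma ftr_wrd_eq {S T : ℕ} (hS : 0 < S) (c : Fin S) (t : Fin (T - 1)) :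
    ftr S T (wrd S T hS (c, c)) t =
      if t.1 = 0 then (c, c) else if t.1 = 1 then (c, ⟨0, hS⟩) else (⟨0, hS⟩, ⟨0, hS⟩) := by
  simp only [ftr, wrd]
  by_cases h0 : t.1 = 0
  · simp [h0]
  · by_cases h1 : t.1 = 1 <;> simp [h0, h1]

/-- Column of the chosen-word matrix. -/
def BB (S T : ℕ) (hS : 0 < S) (p q : Fin S × Fin S) : ℤ := (trCount S T (wrd S T hS p) q : ℤ)

lemma BB_ne {S T : ℕ} (hS : 0 < S) (hT : 2 ≤ T) {a b : Fin S} (hab : a ≠ b)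
    (q : Fin S × Fin S) :
    BB S T hS (a, b) q = (if q = (a, b) then 1 else 0)
      + ((T : ℤ) - 2) * (if q = (b, b) then 1 else 0) := by
  rw [BB, trCount_eq_card]
  have hfe : (univ.filter fun t => ftr S T (wrd S T hS (a, b)) t = q)
      = univ.filter (fun t : Fin (T-1) => (if t.1 = 0 then ((a,b) : Fin S × Fin S) else (b,b)) = q) :=
    Finset.filter_congr fun t _ => by rw [ftr_wrd_ne hS hab]
  rw [hfe]
  have hne : ((a, b) : Fin S × Fin S) ≠ (b, b) := by simp [hab]
  by_cases h1 : q = (a, b)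
  · subst h1
    rw [show (univ.filter fun t : Fin (T-1) =>
          (if t.1 = 0 then ((a,b) : Fin S × Fin S) else (b,b)) = (a,b))
        = univ.filter (fun t => t.1 = 0) from
      Finset.filter_congr fun t _ => by by_cases h : t.1 = 0 <;> simp [h, hne.symm, hne]]
    rw [card_filter_val_eq 0 (by omega)]
    simp [hne.symm, hab]
  · by_cases h2 : q = (b, b)
    · subst h2
      rw [show (univ.filter fun t : Fin (T-1) =>
            (if t.1 = 0 then ((a,b) : Fin S × Fin S) else (b,b)) = (b,b))
          = univ.filter (fun t => ¬ t.1 = 0) from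
        Finset.filter_congr fun t _ => by by_cases h : t.1 = 0 <;> simp [h, hne]]
      rw [card_filter_val_ne (by omega)]
      have : ((T - 1 - 1 : ℕ) : ℤ) = (T : ℤ) - 2 := by push_cast [hT]; omega
      simp [this, hne, Ne.symm hab]
    · rw [show (univ.filter fun t : Fin (T-1) =>
            (if t.1 = 0 then ((a,b) : Fin S × Fin S) else (b,b)) = q)
          = (∅ : Finset (Fin (T-1))) from Finset.eq_empty_of_forall_notMem fun t => by
        by_cases h : t.1 = 0 <;> simp [h] <;> [exact fun hc => h1 hc.symm;
          exact fun hc => h2 hc.symm]]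
      simp [h1, h2]

lemma BB_zz {S T : ℕ} (hS : 0 < S) (hT : 2 ≤ T) (q : Fin S × Fin S) :
    BB S T hS (⟨0, hS⟩, ⟨0, hS⟩) q
      = ((T : ℤ) - 1) * (if q = (⟨0, hS⟩, ⟨0, hS⟩) then 1 else 0) := by
  rw [BB, trCount_eq_card]
  have hfe : (univ.filter fun t => ftr S T (wrd S T hS (⟨0, hS⟩, ⟨0, hS⟩)) t = q)
      = univ.filter (fun _ : Fin (T-1) => ((⟨0, hS⟩, ⟨0, hS⟩) : Fin S × Fin S) = q) :=
    Finset.filter_congr fun t _ => by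
      rw [ftr_wrd_eq hS]
      by_cases h0 : t.1 = 0
      · simp [h0]
      · by_cases h1 : t.1 = 1 <;> simp [h0, h1]
  rw [hfe]
  by_cases h : q = (⟨0, hS⟩, ⟨0, hS⟩)
  · subst h
    simp only [if_pos rfl, Finset.filter_true]
    have : ((T - 1 : ℕ) : ℤ) = (T : ℤ) - 1 := by push_cast [hT]; omega
    simp [this]
  · simp [h, Ne.symm h]

lemma BB_diag {S T : ℕ} (hS : 0 < S) (hT : 3 ≤ T) {c : Fin S} (hc : c ≠ ⟨0, hS⟩)
    (q : Fin S × Fin S) :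
    BB S T hS (c, c) q = (if q = (c, c) then 1 else 0) + (if q = (c, ⟨0, hS⟩) then 1 else 0)
      + ((T : ℤ) - 3) * (if q = (⟨0, hS⟩, ⟨0, hS⟩) then 1 else 0) := by
  rw [BB, trCount_eq_card]
  set z : Fin S := ⟨0, hS⟩ with hz
  have hfe : (univ.filter fun t => ftr S T (wrd S T hS (c, c)) t = q)
      = univ.filter (fun t : Fin (T-1) =>
          (if t.1 = 0 then ((c,c) : Fin S × Fin S) else if t.1 = 1 then (c, z) else (z, z)) = q) :=
    Finset.filter_congr fun t _ => by rw [ftr_wrd_eq hS]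
  rw [hfe]
  have hne1 : ((c, c) : Fin S × Fin S) ≠ (c, z) := by simp [hc]
  have hne2 : ((c, c) : Fin S × Fin S) ≠ (z, z) := by simp [hc]
  have hne3 : ((c, z) : Fin S × Fin S) ≠ (z, z) := by simp [hc]
  by_cases h1 : q = (c, c)
  · subst h1
    rw [show (univ.filter fun t : Fin (T-1) =>
          (if t.1 = 0 then ((c,c) : Fin S × Fin S) else if t.1 = 1 then (c, z) else (z, z)) = (c,c))
        = univ.filter (fun t => t.1 = 0) from
      Finset.filter_congr fun t _ => by
        by_cases h : t.1 = 0
        · simp [h]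
        · by_cases h' : t.1 = 1 <;> simp [h, h', hne1.symm, hne2.symm, hne1, hne2]]
    rw [card_filter_val_eq 0 (by omega)]
    simp [hne1, hne2]
  · by_cases h2 : q = (c, z)
    · subst h2
      rw [show (univ.filter fun t : Fin (T-1) =>
            (if t.1 = 0 then ((c,c) : Fin S × Fin S) else if t.1 = 1 then (c, z) else (z, z)) = (c,z))
          = univ.filter (fun t => t.1 = 1) from
        Finset.filter_congr fun t _ => by
          by_cases h : t.1 = 0
          · simp [h, hne1]
          · by_cases h' : t.1 = 1 <;> simp [h, h', hne3, hne3.symm]]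
      rw [card_filter_val_eq 1 (by omega)]
      simp [Ne.symm hne1, hne3]
    · by_cases h3 : q = (z, z)
      · subst h3
        rw [show (univ.filter fun t : Fin (T-1) =>
              (if t.1 = 0 then ((c,c) : Fin S × Fin S) else if t.1 = 1 then (c, z) else (z, z)) = (z,z))
            = univ.filter (fun t => ¬ t.1 = 0 ∧ ¬ t.1 = 1) from
          Finset.filter_congr fun t _ => by
            by_cases h : t.1 = 0
            · simp [h, hne2]
            · by_cases h' : t.1 = 1 <;> simp [h, h', hne3]]
        rw [card_filter_val_ge2 (by omega)]
        have : ((T - 1 - 2 : ℕ) : ℤ) = (T : ℤ) - 3 := by push_cast [hT]; omega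
        simp [this, Ne.symm hne2, Ne.symm hne3]
      · rw [show (univ.filter fun t : Fin (T-1) =>
              (if t.1 = 0 then ((c,c) : Fin S × Fin S) else if t.1 = 1 then (c, z) else (z, z)) = q)
            = (∅ : Finset (Fin (T-1))) from Finset.eq_empty_of_forall_notMem fun t => by
          by_cases h : t.1 = 0
          · simp [h]; exact fun hc' => h1 hc'.symm
          · by_cases h' : t.1 = 1 <;> simp [h, h']
            · exact fun hc' => h2 hc'.symm
            · exact fun hc' => h3 hc'.symm]
        simp [h1, h2, h3]

lemma BB_diag_T2 {S : ℕ} (hS : 0 < S) (c : Fin S) (q : Fin S × Fin S) :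
    BB S 2 hS (c, c) q = if q = (c, c) then 1 else 0 := by
  rw [BB, trCount_eq_card]
  have hfe : (univ.filter fun t => ftr S 2 (wrd S 2 hS (c, c)) t = q)
      = univ.filter (fun _ : Fin 1 => ((c, c) : Fin S × Fin S) = q) :=
    Finset.filter_congr fun t _ => by
      rw [ftr_wrd_eq hS]
      have : t.1 = 0 := by omega
      simp [this]
  rw [hfe]
  by_cases h : q = (c, c)
  · subst h; simp
  · have : (univ.filter fun _ : Fin 1 => ((c,c) : Fin S × Fin S) = q) = ∅ :=
      Finset.eq_empty_of_forall_notMem fun t => by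
        simp only [Finset.mem_filter]
        exact fun hc => h hc.2.symm
    rw [this]
    simp [h]


/-- Standard basis vector on pairs. -/
def ee {S : ℕ} (q : Fin S × Fin S) : (Fin S × Fin S) → ℤ := fun q' => if q' = q then 1 else 0

lemma sum_ee {S : ℕ} (q : Fin S × Fin S) : ∑ q', ee q q' = 1 := by
  simp [ee, Finset.sum_ite_eq']

section Span

variable {S T : ℕ}

lemma mem_span_diag (hS : 0 < S) (hT : 2 ≤ T) (c : Fin S) :
    ee (c, c) - ee (⟨0, hS⟩, ⟨0, hS⟩) ∈ Submodule.span ℤ (Set.range (BB S T hS)) := by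
  by_cases hc : c = ⟨0, hS⟩
  · subst hc; simp
  · rcases eq_or_lt_of_le hT with hT2 | hT3
    · -- T = 2
      have hT2' : T = 2 := hT2.symm
      subst hT2'
      have : ee (c, c) - ee (⟨0, hS⟩, ⟨0, hS⟩)
          = BB S 2 hS (c, c) - BB S 2 hS (⟨0, hS⟩, ⟨0, hS⟩) := by
        funext q'
        simp only [Pi.sub_apply, BB_diag_T2 hS, BB_zz hS (le_refl 2), ee]
        all_goals norm_num
      rw [this]
      exact sub_mem (Submodule.subset_span ⟨(c, c), rfl⟩)
        (Submodule.subset_span ⟨(⟨0, hS⟩, ⟨0, hS⟩), rfl⟩)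
    · -- T ≥ 3
      have hT3' : 3 ≤ T := hT3
      have : ee (c, c) - ee (⟨0, hS⟩, ⟨0, hS⟩)
          = BB S T hS (c, c) - BB S T hS (c, ⟨0, hS⟩) := by
        funext q'
        simp only [Pi.sub_apply, BB_diag hS hT3' hc, BB_ne hS hT (hc : c ≠ ⟨0, hS⟩), ee]
        ring
      rw [this]
      exact sub_mem (Submodule.subset_span ⟨(c, c), rfl⟩)
        (Submodule.subset_span ⟨(c, ⟨0, hS⟩), rfl⟩)

lemma mem_span_diff (hS : 0 < S) (hT : 2 ≤ T) (q : Fin S × Fin S) :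
    ee q - ee (⟨0, hS⟩, ⟨0, hS⟩) ∈ Submodule.span ℤ (Set.range (BB S T hS)) := by
  obtain ⟨a, b⟩ := q
  by_cases hab : a = b
  · subst hab; exact mem_span_diag hS hT a
  · by_cases hbz : b = ⟨0, hS⟩
    · subst hbz
      have : ee (a, ⟨0, hS⟩) - ee (⟨0, hS⟩, ⟨0, hS⟩)
          = BB S T hS (a, ⟨0, hS⟩) - BB S T hS (⟨0, hS⟩, ⟨0, hS⟩) := by
        funext q'
        simp only [Pi.sub_apply, BB_ne hS hT (hab : a ≠ ⟨0, hS⟩), BB_zz hS hT, ee]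
        ring
      rw [this]
      exact sub_mem (Submodule.subset_span ⟨(a, ⟨0, hS⟩), rfl⟩)
        (Submodule.subset_span ⟨(⟨0, hS⟩, ⟨0, hS⟩), rfl⟩)
    · have key : ee (a, b) - ee (⟨0, hS⟩, ⟨0, hS⟩)
          = (BB S T hS (a, b) - BB S T hS (⟨0, hS⟩, ⟨0, hS⟩))
          - ((T : ℤ) - 2) • (ee (b, b) - ee (⟨0, hS⟩, ⟨0, hS⟩)) := by
        funext q'
        simp only [Pi.sub_apply, Pi.smul_apply, BB_ne hS hT hab, BB_zz hS hT, ee,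
          smul_eq_mul]
        ring
      rw [key]
      exact sub_mem
        (sub_mem (Submodule.subset_span ⟨(a, b), rfl⟩)
          (Submodule.subset_span ⟨(⟨0, hS⟩, ⟨0, hS⟩), rfl⟩))
        (Submodule.smul_mem _ _ (mem_span_diag hS hT b))

lemma exists_coeff (hS : 0 < S) (hT : 2 ≤ T) (v : (Fin S × Fin S) → ℤ)
    (hdvd : ((T : ℤ) - 1) ∣ ∑ q, v q) :
    ∃ cf : (Fin S × Fin S) → ℤ, ∀ q', ∑ p, cf p * BB S T hS p q' = v q' := by
  obtain ⟨d, hd⟩ := hdvd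
  have hv : v = (∑ q, v q • (ee q - ee (⟨0, hS⟩, ⟨0, hS⟩)))
      + d • BB S T hS (⟨0, hS⟩, ⟨0, hS⟩) := by
    funext q'
    simp only [Pi.add_apply, Pi.smul_apply, Finset.sum_apply, Pi.sub_apply, smul_eq_mul,
      BB_zz hS hT, ee, mul_sub]
    rw [Finset.sum_sub_distrib, ← Finset.sum_mul]
    simp only [mul_ite, mul_one, mul_zero, Finset.sum_ite_eq, Finset.mem_univ, if_true]
    split_ifs with h
    · rw [hd]; ring
    · ring
  have hmem : v ∈ Submodule.span ℤ (Set.range (BB S T hS)) := by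
    rw [hv]
    exact add_mem
      (Submodule.sum_mem _ fun q _ => Submodule.smul_mem _ _ (mem_span_diff hS hT q))
      (Submodule.smul_mem _ _ (Submodule.subset_span ⟨(⟨0, hS⟩, ⟨0, hS⟩), rfl⟩))
  obtain ⟨cf, hcf⟩ := (Submodule.mem_span_range_iff_exists_fun ℤ).mp hmem
  refine ⟨cf, fun q' => ?_⟩
  have := congrFun hcf q'
  simpa [Finset.sum_apply, smul_eq_mul] using this

end Span


lemma exists_perm_comp {α β : Type*} [Fintype α] [Fintype β] [DecidableEq α] [DecidableEq β]
    (f g : α → β) (hf : Function.Injective f) (hg : Function.Injective g) :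
    ∃ σ : Equiv.Perm β, ∀ a, σ (f a) = g a := by
  classical
  have hcard : Fintype.card ↥(Set.range f)ᶜ = Fintype.card ↥(Set.range g)ᶜ := by
    rw [Fintype.card_compl_set, Fintype.card_compl_set,
      Set.card_range_of_injective hf, Set.card_range_of_injective hg]
  let ec : ↥(Set.range f)ᶜ ≃ ↥(Set.range g)ᶜ := Fintype.equivOfCardEq hcard
  let σ : Equiv.Perm β :=
    (Equiv.Set.sumCompl (Set.range f)).symm.trans
      ((Equiv.sumCongr ((Equiv.ofInjective f hf).symm.trans (Equiv.ofInjective g hg)) ec).trans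
        (Equiv.Set.sumCompl (Set.range g)))
  refine ⟨σ, fun a => ?_⟩
  show (Equiv.Set.sumCompl (Set.range g))
      ((Equiv.sumCongr _ ec) ((Equiv.Set.sumCompl (Set.range f)).symm (f a))) = g a
  rw [Equiv.Set.sumCompl_symm_apply_of_mem (Set.mem_range_self a)]
  simp [Equiv.ofInjective_symm_apply]

lemma dsum {m n : ℕ} (h : n ≤ m) (G : Fin n → ℤ) :
    ∑ l : Fin m, (if hl : l.1 < n then G ⟨l.1, hl⟩ else 0) = ∑ i : Fin n, G i := by
  have h1 : ∀ k : ℕ, ∀ _ : k ∈ Finset.range m, k ∉ Finset.range n →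
      (if hl : k < n then G ⟨k, hl⟩ else 0) = 0 := by
    intro k _ hk
    rw [dif_neg (by simpa using hk)]
  calc ∑ l : Fin m, (if hl : l.1 < n then G ⟨l.1, hl⟩ else 0)
      = ∑ k ∈ Finset.range m, (if hl : k < n then G ⟨k, hl⟩ else 0) :=
        Fin.sum_univ_eq_sum_range (fun k => if hl : k < n then G ⟨k, hl⟩ else 0) m
    _ = ∑ k ∈ Finset.range n, (if hl : k < n then G ⟨k, hl⟩ else 0) :=
        (Finset.sum_subset (Finset.range_subset_range.mpr h) h1).symm
    _ = ∑ i : Fin n, (if hl : (i : ℕ) < n then G ⟨i, hl⟩ else 0) :=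
        (Fin.sum_univ_eq_sum_range (fun k => if hl : k < n then G ⟨k, hl⟩ else 0) n).symm
    _ = ∑ i : Fin n, G i := by
        apply Finset.sum_congr rfl
        intro i _
        rw [dif_pos i.2]


section Matrices

variable {S T : ℕ}

/-- The adapted basis vectors (scaled at the special pair). -/
def uvec (S T : ℕ) (hS : 0 < S) (q : Fin S × Fin S) : (Fin S × Fin S) → ℤ := fun q' =>
  if q = (⟨0, hS⟩, ⟨0, hS⟩) then ((T : ℤ) - 1) * (if q' = q then 1 else 0)
  else (if q' = q then 1 else 0) - (if q' = (⟨0, hS⟩, ⟨0, hS⟩) then 1 else 0)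

lemma sum_uvec (hS : 0 < S) (q : Fin S × Fin S) :
    ∑ q', uvec S T hS q q' = if q = (⟨0, hS⟩, ⟨0, hS⟩) then (T : ℤ) - 1 else 0 := by
  by_cases hq : q = (⟨0, hS⟩, ⟨0, hS⟩)
  · simp [uvec, hq, ← Finset.mul_sum, Finset.sum_ite_eq']
  · simp [uvec, hq, Finset.sum_sub_distrib, Finset.sum_ite_eq']

lemma uvec_dvd (hS : 0 < S) (q : Fin S × Fin S) :
    ((T : ℤ) - 1) ∣ ∑ q', uvec S T hS q q' := by
  rw [sum_uvec hS q]
  split_ifs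
  · exact dvd_refl _
  · exact dvd_zero _

/-- The index of the last row. -/
def lastn (S : ℕ) (hS : 0 < S) : Fin (S ^ 2) := ⟨S ^ 2 - 1, by
  have : 0 < S ^ 2 := pow_pos hS 2
  omega⟩

/-- Nilpotent part of the row operations. -/
def mm (S : ℕ) (hS : 0 < S) : Matrix (Fin (S ^ 2)) (Fin (S ^ 2)) ℤ :=
  Matrix.of fun i k => if i = lastn S hS ∧ k ≠ lastn S hS then 1 else 0

def Umat (S : ℕ) (hS : 0 < S) : Matrix (Fin (S ^ 2)) (Fin (S ^ 2)) ℤ := 1 + mm S hS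

def U0mat (S : ℕ) (hS : 0 < S) : Matrix (Fin (S ^ 2)) (Fin (S ^ 2)) ℤ := 1 - mm S hS

lemma mm_mul_mm (hS : 0 < S) : mm S hS * mm S hS = 0 := by
  ext i j
  rw [Matrix.mul_apply]
  apply Finset.sum_eq_zero
  intro k _
  simp only [mm, Matrix.of_apply]
  split_ifs with h1 h2 <;> simp_all

lemma Umat_mul_U0mat (hS : 0 < S) : Umat S hS * U0mat S hS = 1 := by
  have h := mm_mul_mm (S := S) hS
  rw [Umat, U0mat, Matrix.add_mul, Matrix.mul_sub, Matrix.mul_sub, h]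
  simp only [Matrix.one_mul, Matrix.mul_one, sub_zero]
  abel

lemma U0mat_apply (hS : 0 < S) (i k : Fin (S ^ 2)) :
    U0mat S hS i k = (if i = k then 1 else 0)
      - (if i = lastn S hS ∧ k ≠ lastn S hS then 1 else 0) := by
  simp [U0mat, mm, Matrix.one_apply]

/-- The inverse coefficients. -/
def Qm (S T : ℕ) (hS : 0 < S) (q' p : Fin S × Fin S) : ℤ :=
  if q' = (⟨0, hS⟩, ⟨0, hS⟩) then 1 else BB S T hS p q'

lemma sumQP (hS : 0 < S) (hT : 2 ≤ T) (cfP : (Fin S × Fin S) → (Fin S × Fin S) → ℤ)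
    (hcfP : ∀ q q', ∑ p, cfP q p * BB S T hS p q' = uvec S T hS q q') (q' q : Fin S × Fin S) :
    ∑ p, Qm S T hS q' p * cfP q p = if q' = q then 1 else 0 := by
  have hTz : ((T : ℤ) - 1) ≠ 0 := by
    have : (2 : ℤ) ≤ (T : ℤ) := by exact_mod_cast hT
    omega
  by_cases hq' : q' = (⟨0, hS⟩, ⟨0, hS⟩)
  · subst hq'
    simp only [Qm, eq_self_iff_true, if_true, one_mul]
    refine mul_left_cancel₀ hTz ?_
    calc ((T : ℤ) - 1) * ∑ p, cfP q p
        = ∑ p, cfP q p * ((T : ℤ) - 1) := by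
          rw [Finset.mul_sum]; exact Finset.sum_congr rfl fun p _ => mul_comm _ _
      _ = ∑ p, cfP q p * ∑ q'', BB S T hS p q'' := by
          refine Finset.sum_congr rfl fun p _ => ?_
          rw [show ∑ q'', BB S T hS p q'' = (T : ℤ) - 1 from
            sum_trCount_int (by omega) (wrd S T hS p)]
      _ = ∑ p, ∑ q'', cfP q p * BB S T hS p q'' := by
          exact Finset.sum_congr rfl fun p _ => Finset.mul_sum _ _ _
      _ = ∑ q'', ∑ p, cfP q p * BB S T hS p q'' := Finset.sum_comm
      _ = ∑ q'', uvec S T hS q q'' := Finset.sum_congr rfl fun q'' _ => hcfP q q''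
      _ = ((T : ℤ) - 1) * (if (⟨0, hS⟩, ⟨0, hS⟩) = q then 1 else 0) := by
          rw [sum_uvec hS q]
          by_cases hq : q = (⟨0, hS⟩, ⟨0, hS⟩) <;> simp [hq, eq_comm]
  · simp only [Qm, if_neg hq']
    calc ∑ p, BB S T hS p q' * cfP q p = ∑ p, cfP q p * BB S T hS p q' :=
        Finset.sum_congr rfl fun p _ => mul_comm _ _
      _ = uvec S T hS q q' := hcfP q q'
      _ = if q' = q then 1 else 0 := by
          unfold uvec
          by_cases hq : q = (⟨0, hS⟩, ⟨0, hS⟩)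
          · have hne : q' ≠ q := fun h => hq' (h.trans hq)
            rw [if_pos hq, if_neg hne]
            try rw [if_neg hne]
            ring
          · rw [if_neg hq, if_neg hq']
            ring

/-- The column operation matrix. -/
def Vmat (S T : ℕ) (r : Fin (S ^ 2) ≃ Fin S × Fin S) (c : Fin (S ^ T) ≃ (Fin T → Fin S))
    (cfP : (Fin S × Fin S) → (Fin S × Fin S) → ℤ)
    (cfA : (Fin T → Fin S) → (Fin S × Fin S) → ℤ) :
    Matrix (Fin (S ^ T)) (Fin (S ^ T)) ℤ :=
  Matrix.of fun l j =>
    if hj : (j : ℕ) < S ^ 2 then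
      (if hl : (l : ℕ) < S ^ 2 then cfP (r ⟨j.1, hj⟩) (r ⟨l.1, hl⟩) else 0)
    else
      (if l = j then 1 else 0) - (if hl : (l : ℕ) < S ^ 2 then cfA (c j) (r ⟨l.1, hl⟩) else 0)

/-- The inverse of the column operation matrix. -/
def Wmat (S T : ℕ) (hS : 0 < S) (r : Fin (S ^ 2) ≃ Fin S × Fin S)
    (c : Fin (S ^ T) ≃ (Fin T → Fin S))
    (cfA : (Fin T → Fin S) → (Fin S × Fin S) → ℤ) :
    Matrix (Fin (S ^ T)) (Fin (S ^ T)) ℤ :=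
  Matrix.of fun j l =>
    if hj : (j : ℕ) < S ^ 2 then
      (if hl : (l : ℕ) < S ^ 2 then Qm S T hS (r ⟨j.1, hj⟩) (r ⟨l.1, hl⟩)
       else ∑ p, Qm S T hS (r ⟨j.1, hj⟩) p * cfA (c l) p)
    else (if j = l then 1 else 0)

/-- The diagonal target matrix. -/
def Dmat (S T : ℕ) : Matrix (Fin (S ^ 2)) (Fin (S ^ T)) ℤ :=
  Matrix.of fun i j =>
    if (i : ℕ) = (j : ℕ) then (if (i : ℕ) = S ^ 2 - 1 then (T : ℤ) - 1 else 1) else 0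

lemma AV_eq (hS : 0 < S) (hT : 2 ≤ T) (hnm : S ^ 2 ≤ S ^ T)
    (r : Fin (S ^ 2) ≃ Fin S × Fin S) (hrlast : r (lastn S hS) = (⟨0, hS⟩, ⟨0, hS⟩))
    (c : Fin (S ^ T) ≃ (Fin T → Fin S))
    (hcw : ∀ i : Fin (S ^ 2), c ⟨i.1, lt_of_lt_of_le i.2 hnm⟩ = wrd S T hS (r i))
    (cfP : (Fin S × Fin S) → (Fin S × Fin S) → ℤ)
    (hcfP : ∀ q q', ∑ p, cfP q p * BB S T hS p q' = uvec S T hS q q')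
    (cfA : (Fin T → Fin S) → (Fin S × Fin S) → ℤ)
    (hcfA : ∀ w q', ∑ p, cfA w p * BB S T hS p q' = (trCount S T w q' : ℤ)) :
    (Matrix.of fun (i : Fin (S ^ 2)) (j : Fin (S ^ T)) => (trCount S T (c j) (r i) : ℤ))
        * Vmat S T r c cfP cfA
      = U0mat S hS * Dmat S T := by
  have hcl : ∀ (l : Fin (S ^ T)) (hl : (l : ℕ) < S ^ 2), c l = wrd S T hS (r ⟨l.1, hl⟩) := by
    intro l hl
    have h := hcw ⟨l.1, hl⟩
    have : (⟨(⟨l.1, hl⟩ : Fin (S ^ 2)).1, lt_of_lt_of_le (⟨l.1, hl⟩ : Fin (S ^ 2)).2 hnm⟩ :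
        Fin (S ^ T)) = l := Fin.ext rfl
    rwa [this] at h
  ext i j
  rw [Matrix.mul_apply, Matrix.mul_apply]
  by_cases hj : (j : ℕ) < S ^ 2
  · have hA : ∀ l : Fin (S ^ T),
        (Matrix.of fun (i : Fin (S ^ 2)) (j : Fin (S ^ T)) => (trCount S T (c j) (r i) : ℤ)) i l
          * Vmat S T r c cfP cfA l j
        = if hl : (l : ℕ) < S ^ 2 then
            BB S T hS (r ⟨l.1, hl⟩) (r i) * cfP (r ⟨j.1, hj⟩) (r ⟨l.1, hl⟩) else 0 := by
      intro l
      by_cases hl : (l : ℕ) < S ^ 2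
      · rw [dif_pos hl]
        simp only [Vmat, Matrix.of_apply, dif_pos hj, dif_pos hl, hcl l hl, BB]
      · rw [dif_neg hl]
        simp only [Vmat, Matrix.of_apply, dif_pos hj, dif_neg hl, mul_zero]
    rw [Finset.sum_congr rfl fun l _ => hA l,
      dsum hnm (fun i0 : Fin (S ^ 2) => BB S T hS (r i0) (r i) * cfP (r ⟨j.1, hj⟩) (r i0)),
      Equiv.sum_comp r (fun p => BB S T hS p (r i) * cfP (r ⟨j.1, hj⟩) p),
      show (∑ p, BB S T hS p (r i) * cfP (r ⟨j.1, hj⟩) p)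
          = ∑ p, cfP (r ⟨j.1, hj⟩) p * BB S T hS p (r i) from
        Finset.sum_congr rfl fun p _ => mul_comm _ _,
      hcfP]
    have hD : ∀ k : Fin (S ^ 2), U0mat S hS i k * Dmat S T k j
        = if k = ⟨j.1, hj⟩ then
            U0mat S hS i k * (if (j : ℕ) = S ^ 2 - 1 then (T : ℤ) - 1 else 1) else 0 := by
      intro k
      by_cases hk : k = ⟨j.1, hj⟩
      · subst hk
        simp [Dmat]
      · rw [if_neg hk]
        have hkj : (k : ℕ) ≠ (j : ℕ) := fun h => hk (Fin.ext h)
        simp [Dmat, hkj]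
    rw [Finset.sum_congr rfl fun k _ => hD k,
      Finset.sum_ite_eq' Finset.univ (⟨j.1, hj⟩ : Fin (S ^ 2)) _]
    simp only [Finset.mem_univ, if_true]
    by_cases hjl : (⟨j.1, hj⟩ : Fin (S ^ 2)) = lastn S hS
    · have hjv : (j : ℕ) = S ^ 2 - 1 := congrArg Fin.val hjl
      rw [hjl, hrlast, if_pos hjv, U0mat_apply]
      have hri : (r i = (⟨0, hS⟩, ⟨0, hS⟩)) ↔ i = lastn S hS := by
        rw [← hrlast]; exact r.apply_eq_iff_eq
      unfold uvec
      rw [if_pos rfl]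
      by_cases hi : i = lastn S hS
      · simp [hri, hi, hrlast]
      · simp [hri, hi, hrlast]
    · have hjv : (j : ℕ) ≠ S ^ 2 - 1 := fun h => hjl (Fin.ext h)
      have hq : r ⟨j.1, hj⟩ ≠ (⟨0, hS⟩, ⟨0, hS⟩) := fun h =>
        hjl (r.injective (h.trans hrlast.symm))
      rw [if_neg hjv, mul_one, U0mat_apply]
      unfold uvec
      rw [if_neg hq]
      have hri1 : (r i = r ⟨j.1, hj⟩) ↔ i = ⟨j.1, hj⟩ := r.apply_eq_iff_eq
      have hri2 : (r i = (⟨0, hS⟩, ⟨0, hS⟩)) ↔ i = lastn S hS := by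
        rw [← hrlast]; exact r.apply_eq_iff_eq
      by_cases hi1 : i = (⟨j.1, hj⟩ : Fin (S ^ 2))
      · have hi2 : i ≠ lastn S hS := fun h => hjl (hi1 ▸ h)
        simp [hri1, hri2, hi1, hi2, hjl, hq, hrlast]
      · by_cases hi2 : i = lastn S hS
        · have hq2 : ¬ ((⟨0,hS⟩,⟨0,hS⟩) : Fin S × Fin S) = r ⟨j.1, hj⟩ := fun h => hq h.symm
          simp only [hi2, hrlast, eq_self_iff_true, if_true, hri1]
          simp [hjl, Ne.symm hjl, hq2]
        · simp [hri1, hri2, hi1, hi2, hjl, hq, hrlast]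
  · have hA : ∀ l : Fin (S ^ T),
        (Matrix.of fun (i : Fin (S ^ 2)) (j : Fin (S ^ T)) => (trCount S T (c j) (r i) : ℤ)) i l
          * Vmat S T r c cfP cfA l j
        = (if l = j then (trCount S T (c j) (r i) : ℤ) else 0)
          - (if hl : (l : ℕ) < S ^ 2 then
              BB S T hS (r ⟨l.1, hl⟩) (r i) * cfA (c j) (r ⟨l.1, hl⟩) else 0) := by
      intro l
      simp only [Vmat, Matrix.of_apply, dif_neg hj]
      rw [mul_sub]
      congr 1
      · by_cases hlj : l = j
        · subst hlj; simp
        · simp [hlj]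
      · by_cases hl : (l : ℕ) < S ^ 2
        · rw [dif_pos hl, dif_pos hl, hcl l hl, BB]
        · rw [dif_neg hl, dif_neg hl, mul_zero]
    rw [Finset.sum_congr rfl fun l _ => hA l, Finset.sum_sub_distrib,
      Finset.sum_ite_eq' Finset.univ j _,
      dsum hnm (fun i0 : Fin (S ^ 2) => BB S T hS (r i0) (r i) * cfA (c j) (r i0)),
      Equiv.sum_comp r (fun p => BB S T hS p (r i) * cfA (c j) p),
      show (∑ p, BB S T hS p (r i) * cfA (c j) p)
          = ∑ p, cfA (c j) p * BB S T hS p (r i) from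
        Finset.sum_congr rfl fun p _ => mul_comm _ _,
      hcfA]
    have hz : ∀ k : Fin (S ^ 2), U0mat S hS i k * Dmat S T k j = 0 := by
      intro k
      have hk : (k : ℕ) ≠ (j : ℕ) := by
        have := k.2
        omega
      simp [Dmat, hk]
    rw [Finset.sum_congr rfl fun k _ => hz k]
    simp

lemma WV_eq (hS : 0 < S) (hT : 2 ≤ T) (hnm : S ^ 2 ≤ S ^ T)
    (r : Fin (S ^ 2) ≃ Fin S × Fin S)
    (c : Fin (S ^ T) ≃ (Fin T → Fin S))
    (cfP : (Fin S × Fin S) → (Fin S × Fin S) → ℤ)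
    (hcfP : ∀ q q', ∑ p, cfP q p * BB S T hS p q' = uvec S T hS q q')
    (cfA : (Fin T → Fin S) → (Fin S × Fin S) → ℤ) :
    Wmat S T hS r c cfA * Vmat S T r c cfP cfA = 1 := by
  ext j j'
  rw [Matrix.mul_apply, Matrix.one_apply]
  by_cases hj : (j : ℕ) < S ^ 2
  · by_cases hj' : (j' : ℕ) < S ^ 2
    · have hterm : ∀ l : Fin (S ^ T), Wmat S T hS r c cfA j l * Vmat S T r c cfP cfA l j'
          = if hl : (l : ℕ) < S ^ 2 then
              Qm S T hS (r ⟨j.1, hj⟩) (r ⟨l.1, hl⟩) * cfP (r ⟨j'.1, hj'⟩) (r ⟨l.1, hl⟩)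
            else 0 := by
        intro l
        by_cases hl : (l : ℕ) < S ^ 2
        · rw [dif_pos hl]
          simp only [Wmat, Vmat, Matrix.of_apply, dif_pos hj, dif_pos hj', dif_pos hl]
        · rw [dif_neg hl]
          simp only [Wmat, Vmat, Matrix.of_apply, dif_pos hj, dif_pos hj', dif_neg hl, mul_zero]
      rw [Finset.sum_congr rfl fun l _ => hterm l,
        dsum hnm (fun i0 : Fin (S ^ 2) =>
          Qm S T hS (r ⟨j.1, hj⟩) (r i0) * cfP (r ⟨j'.1, hj'⟩) (r i0)),
        Equiv.sum_comp r (fun p => Qm S T hS (r ⟨j.1, hj⟩) p * cfP (r ⟨j'.1, hj'⟩) p),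
        sumQP hS hT cfP hcfP]
      have heq : (r ⟨j.1, hj⟩ = r ⟨j'.1, hj'⟩) ↔ j = j' := by
        rw [r.apply_eq_iff_eq]
        simp [Fin.ext_iff]
      by_cases hjj : j = j' <;> simp [heq, hjj]
    · have hterm : ∀ l : Fin (S ^ T), Wmat S T hS r c cfA j l * Vmat S T r c cfP cfA l j'
          = (if l = j' then Wmat S T hS r c cfA j l else 0)
            - (if hl : (l : ℕ) < S ^ 2 then
                Qm S T hS (r ⟨j.1, hj⟩) (r ⟨l.1, hl⟩) * cfA (c j') (r ⟨l.1, hl⟩) else 0) := by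
        intro l
        rw [show Vmat S T r c cfP cfA l j' = (if l = j' then 1 else 0)
            - (if hl : (l : ℕ) < S ^ 2 then cfA (c j') (r ⟨l.1, hl⟩) else 0) from by
          simp only [Vmat, Matrix.of_apply, dif_neg hj']]
        rw [mul_sub]
        congr 1
        · by_cases hlj : l = j'
          · subst hlj; simp
          · simp [hlj]
        · by_cases hl : (l : ℕ) < S ^ 2
          · rw [dif_pos hl, dif_pos hl]
            simp only [Wmat, Matrix.of_apply, dif_pos hj, dif_pos hl]
          · rw [dif_neg hl, dif_neg hl, mul_zero]
      rw [Finset.sum_congr rfl fun l _ => hterm l, Finset.sum_sub_distrib,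
        Finset.sum_ite_eq' Finset.univ j' _,
        dsum hnm (fun i0 : Fin (S ^ 2) => Qm S T hS (r ⟨j.1, hj⟩) (r i0) * cfA (c j') (r i0)),
        Equiv.sum_comp r (fun p => Qm S T hS (r ⟨j.1, hj⟩) p * cfA (c j') p)]
      have hW : Wmat S T hS r c cfA j j'
          = ∑ p, Qm S T hS (r ⟨j.1, hj⟩) p * cfA (c j') p := by
        simp only [Wmat, Matrix.of_apply, dif_pos hj, dif_neg hj']
      have hne : j ≠ j' := fun h => hj' (h ▸ hj)
      rw [if_neg hne]
      simp only [Finset.mem_univ, if_true]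
      rw [hW, sub_self]
  · have hW : ∀ l, Wmat S T hS r c cfA j l = if j = l then 1 else 0 := fun l => by
      simp only [Wmat, Matrix.of_apply, dif_neg hj]
    have hsum : ∀ l : Fin (S ^ T), Wmat S T hS r c cfA j l * Vmat S T r c cfP cfA l j'
        = if j = l then Vmat S T r c cfP cfA l j' else 0 := by
      intro l
      rw [hW l, ite_mul, one_mul, zero_mul]
    rw [Finset.sum_congr rfl fun l _ => hsum l,
      Finset.sum_ite_eq Finset.univ j (fun l => Vmat S T r c cfP cfA l j'),
      if_pos (Finset.mem_univ j)]
    by_cases hj'' : (j' : ℕ) < S ^ 2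
    · have hne : j ≠ j' := fun h => hj (h ▸ hj'')
      rw [if_neg hne]
      simp only [Vmat, Matrix.of_apply]
      rw [dif_pos hj'', dif_neg hj]
    · simp only [Vmat, Matrix.of_apply]
      rw [dif_neg hj'', dif_neg hj, sub_zero]

end Matrices

end THMCAux

/-- The Smith normal form of the design matrix of the THMC model without initial
parameters is `diag(1, …, 1, T-1)`: there are unimodular `U`, `V` (and enumerations of
rows and columns) bringing the matrix into this diagonal form. -/
theorem stmt4 (S T : ℕ) (hS : 2 ≤ S) (hT : 2 ≤ T) :
    ∃ (r : Fin (S ^ 2) ≃ Fin S × Fin S) (c : Fin (S ^ T) ≃ (Fin T → Fin S))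
      (U : Matrix (Fin (S ^ 2)) (Fin (S ^ 2)) ℤ)
      (V : Matrix (Fin (S ^ T)) (Fin (S ^ T)) ℤ),
      IsUnit U.det ∧ IsUnit V.det ∧
      U * (Matrix.of fun (i : Fin (S ^ 2)) (j : Fin (S ^ T)) =>
          (trCount S T (c j) (r i) : ℤ)) * V =
        Matrix.of fun (i : Fin (S ^ 2)) (j : Fin (S ^ T)) =>
          if (i : ℕ) = (j : ℕ) then (if (i : ℕ) = S ^ 2 - 1 then (T : ℤ) - 1 else 1)
          else 0 := by
  classical
  have hS0 : 0 < S := by omega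
  have hnm : S ^ 2 ≤ S ^ T := Nat.pow_le_pow_right hS0 hT
  have h1T : 1 ≤ T := by omega
  obtain ⟨r, hrlast⟩ : ∃ r : Fin (S ^ 2) ≃ Fin S × Fin S,
      r (THMCAux.lastn S hS0) = (⟨0, hS0⟩, ⟨0, hS0⟩) := by
    refine ⟨(Equiv.swap (THMCAux.lastn S hS0)
      (((finCongr (pow_two S)).trans finProdFinEquiv.symm).symm (⟨0, hS0⟩, ⟨0, hS0⟩))).trans
      ((finCongr (pow_two S)).trans finProdFinEquiv.symm), ?_⟩
    simp [Equiv.swap_apply_left]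
  have hcard : Fintype.card (Fin T → Fin S) = S ^ T := by simp
  obtain ⟨c, hcw⟩ : ∃ c : Fin (S ^ T) ≃ (Fin T → Fin S),
      ∀ i : Fin (S ^ 2), c ⟨i.1, lt_of_lt_of_le i.2 hnm⟩ = THMCAux.wrd S T hS0 (r i) := by
    obtain ⟨σ, hσ⟩ := THMCAux.exists_perm_comp
      (fun i : Fin (S ^ 2) => (⟨i.1, lt_of_lt_of_le i.2 hnm⟩ : Fin (S ^ T)))
      (fun i : Fin (S ^ 2) => (Fintype.equivFinOfCardEq hcard) (THMCAux.wrd S T hS0 (r i)))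
      (fun a b h => by simpa [Fin.ext_iff] using h)
      (fun a b h => r.injective (THMCAux.wrd_inj hS0 hT
        ((Fintype.equivFinOfCardEq hcard).injective h)))
    refine ⟨(σ : Equiv.Perm (Fin (S ^ T))).trans (Fintype.equivFinOfCardEq hcard).symm, ?_⟩
    intro i
    show (Fintype.equivFinOfCardEq hcard).symm (σ _) = _
    rw [hσ i]
    exact (Fintype.equivFinOfCardEq hcard).symm_apply_apply _
  choose cfP hcfP using fun q => THMCAux.exists_coeff hS0 hT (THMCAux.uvec S T hS0 q)
    (THMCAux.uvec_dvd hS0 q)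
  choose cfA hcfA using fun w : Fin T → Fin S => THMCAux.exists_coeff hS0 hT
    (fun q' => (trCount S T w q' : ℤ))
    (by rw [THMCAux.sum_trCount_int h1T w])
  refine ⟨r, c, THMCAux.Umat S hS0, THMCAux.Vmat S T r c cfP cfA, ?_, ?_, ?_⟩
  · exact Matrix.isUnit_det_of_right_inverse (THMCAux.Umat_mul_U0mat hS0)
  · exact Matrix.isUnit_det_of_left_inverse
      (THMCAux.WV_eq hS0 hT hnm r c cfP hcfP cfA)
  · have hAV := THMCAux.AV_eq hS0 hT hnm r hrlast c hcw cfP hcfP cfA hcfA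
    rw [Matrix.mul_assoc, hAV, ← Matrix.mul_assoc, THMCAux.Umat_mul_U0mat hS0,
      Matrix.one_mul]
    rfl
end

section
/- Fix S ≥ 3 and T ≥ 4, and let A be the transition-count design matrix of the THMC model without initial parameters and without self-loops (rows indexed by ordered pairs (i,j) with i≠j, columns indexed by words in [S]^T with no two consecutive equal letters). Then an integer vector y ∈ ℤ^{S(S−1)} lies in the lattice ℤA generated by the columns of A if and only if the sum of its coordinates is divisible by T−1. -/
/-!
A loop-free word of length `T` has `T - 1` transitions, all off the diagonal, so every column
sums to `T - 1`. Conversely, appending two different letters to the same loop-free word ending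
in `i` changes the column by `e (i, x) - e (i, y)`, and prepending changes it by
`e (x, j) - e (y, j)`. Through a letter `c ∉ {i, k}` these moves connect `(i, j) → (i, c) →
(k, c) → (k, l)`, so the lattice contains all `e p - e q`, hence every vector of sum zero, and
adding multiples of one column gives every vector whose sum is divisible by `T - 1`.
-/

open Finset

theorem AddSubgroup.mem_of_sum_eq_zero {ι : Type*} [Fintype ι] [DecidableEq ι]
    {H : AddSubgroup (ι → ℤ)} (q : ι) (hH : ∀ p, Pi.single p 1 - Pi.single q 1 ∈ H)
    {z : ι → ℤ} (hz : ∑ i, z i = 0) : z ∈ H := by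
  have hdecomp : ∑ p, z p • (Pi.single p 1 - Pi.single q 1) = z := by
    simp only [smul_sub, sum_sub_distrib, ← sum_smul, hz, zero_smul, sub_zero]
    simpa only [← Pi.single_smul', smul_eq_mul, mul_one] using univ_sum_single z
  exact hdecomp ▸ sum_mem fun p _ => zsmul_mem (hH p) (z p)

section Words

variable {S n : ℕ}

theorem trCount_succ (w : Fin (n + 1) → Fin S) (p : Fin S × Fin S) :
    trCount S (n + 1) w p = #{t : Fin n | w t.castSucc = p.1 ∧ w t.succ = p.2} := rfl

theorem noLoop_succ_iff (w : Fin (n + 1) → Fin S) :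
    NoLoop S (n + 1) w ↔ ∀ t : Fin n, w t.castSucc ≠ w t.succ := Iff.rfl

theorem trCount_snoc (u : Fin (n + 1) → Fin S) (x : Fin S) (p : Fin S × Fin S) :
    trCount S (n + 2) (Fin.snoc u x) p =
      trCount S (n + 1) u p + if u (Fin.last n) = p.1 ∧ x = p.2 then 1 else 0 := by
  simp only [trCount_succ, card_filter, Fin.sum_univ_castSucc, Fin.snoc_castSucc,
    Fin.succ_castSucc, Fin.succ_last, Fin.snoc_last]

theorem trCount_cons (x : Fin S) (u : Fin (n + 1) → Fin S) (p : Fin S × Fin S) :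
    trCount S (n + 2) (Fin.cons x u) p =
      trCount S (n + 1) u p + if x = p.1 ∧ u 0 = p.2 then 1 else 0 := by
  simp only [trCount_succ, card_filter, Fin.sum_univ_succ, Fin.cons_succ, Fin.castSucc_zero,
    Fin.cons_zero, ← Fin.succ_castSucc]
  ring

theorem noLoop_snoc_iff (u : Fin (n + 1) → Fin S) (x : Fin S) :
    NoLoop S (n + 2) (Fin.snoc u x) ↔ NoLoop S (n + 1) u ∧ u (Fin.last n) ≠ x := by
  simp only [noLoop_succ_iff, Fin.forall_fin_succ', Fin.snoc_castSucc, Fin.succ_castSucc,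
    Fin.succ_last, Fin.snoc_last]

theorem noLoop_cons_iff (x : Fin S) (u : Fin (n + 1) → Fin S) :
    NoLoop S (n + 2) (Fin.cons x u) ↔ x ≠ u 0 ∧ NoLoop S (n + 1) u := by
  simp only [noLoop_succ_iff, Fin.forall_fin_succ, Fin.cons_succ, Fin.castSucc_zero,
    Fin.cons_zero, ← Fin.succ_castSucc]

theorem exists_noLoop_last (n : ℕ) {i z : Fin S} (h : i ≠ z) :
    ∃ u : Fin (n + 1) → Fin S, NoLoop S (n + 1) u ∧ u (Fin.last n) = i := by
  induction n generalizing i z with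
  | zero => exact ⟨fun _ => i, fun t => t.elim0, rfl⟩
  | succ n ih =>
    obtain ⟨u, hu, hlast⟩ := ih h.symm
    exact ⟨Fin.snoc u i, (noLoop_snoc_iff u i).2 ⟨hu, hlast ▸ h.symm⟩, Fin.snoc_last _ _⟩

theorem exists_noLoop_head (n : ℕ) {j z : Fin S} (h : j ≠ z) :
    ∃ u : Fin (n + 1) → Fin S, NoLoop S (n + 1) u ∧ u 0 = j := by
  induction n generalizing j z with
  | zero => exact ⟨fun _ => j, fun t => t.elim0, rfl⟩
  | succ n ih =>
    obtain ⟨u, hu, hhead⟩ := ih h.symm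
    exact ⟨Fin.cons j u, (noLoop_cons_iff j u).2 ⟨hhead ▸ h, hu⟩, Fin.cons_zero _ _⟩

end Words

section Columns

variable {S n : ℕ}

/-- The column `A_w` of the design matrix; `columnLattice S T` is the lattice `ℤA`. -/
def column (S T : ℕ) (w : Fin T → Fin S) : {p : Fin S × Fin S // p.1 ≠ p.2} → ℤ :=
  fun p => trCount S T w p.1

def columnLattice (S T : ℕ) : AddSubgroup ({p : Fin S × Fin S // p.1 ≠ p.2} → ℤ) :=
  AddSubgroup.closure {v | ∃ w : Fin T → Fin S, NoLoop S T w ∧ v = column S T w}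

theorem column_mem_columnLattice {T : ℕ} {w : Fin T → Fin S} (hw : NoLoop S T w) :
    column S T w ∈ columnLattice S T :=
  AddSubgroup.subset_closure ⟨w, hw, rfl⟩

theorem sum_column {w : Fin (n + 1) → Fin S} (hw : NoLoop S (n + 1) w) :
    ∑ p, column S (n + 1) w p = n := by
  let transition (t : Fin n) : {p : Fin S × Fin S // p.1 ≠ p.2} :=
    ⟨(w t.castSucc, w t.succ), hw t⟩
  have h := card_eq_sum_card_fiberwise (f := transition) (s := univ) (t := univ)
    (fun _ _ => mem_coe.2 (mem_univ _))
  simp only [card_univ, Fintype.card_fin] at h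
  simp only [column, trCount_succ, h, Nat.cast_sum, transition, Subtype.ext_iff, Prod.ext_iff]

theorem column_snoc (u : Fin (n + 1) → Fin S) {x : Fin S} (h : u (Fin.last n) ≠ x) :
    column S (n + 2) (Fin.snoc u x) =
      column S (n + 1) u + Pi.single ⟨(u (Fin.last n), x), h⟩ 1 := by
  ext p
  simp [column, trCount_snoc, Pi.single_apply, Subtype.ext_iff, Prod.ext_iff, eq_comm]

theorem column_cons {x : Fin S} (u : Fin (n + 1) → Fin S) (h : x ≠ u 0) :
    column S (n + 2) (Fin.cons x u) = column S (n + 1) u + Pi.single ⟨(x, u 0), h⟩ 1 := by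
  ext p
  simp [column, trCount_cons, Pi.single_apply, Subtype.ext_iff, Prod.ext_iff, eq_comm]

end Columns

section Lattice

variable {S : ℕ}

theorem single_sub_single_mem_of_fst_eq (n : ℕ) {i x y : Fin S} (hx : i ≠ x) (hy : i ≠ y) :
    Pi.single ⟨(i, x), hx⟩ 1 - Pi.single ⟨(i, y), hy⟩ 1 ∈ columnLattice S (n + 2) := by
  obtain ⟨u, hu, rfl⟩ := exists_noLoop_last n hx
  have h := sub_mem (column_mem_columnLattice ((noLoop_snoc_iff u x).2 ⟨hu, hx⟩))
    (column_mem_columnLattice ((noLoop_snoc_iff u y).2 ⟨hu, hy⟩))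
  rwa [column_snoc u hx, column_snoc u hy, add_sub_add_left_eq_sub] at h

theorem single_sub_single_mem_of_snd_eq (n : ℕ) {j x y : Fin S} (hx : x ≠ j) (hy : y ≠ j) :
    Pi.single ⟨(x, j), hx⟩ 1 - Pi.single ⟨(y, j), hy⟩ 1 ∈ columnLattice S (n + 2) := by
  obtain ⟨u, hu, rfl⟩ := exists_noLoop_head n hx.symm
  have h := sub_mem (column_mem_columnLattice ((noLoop_cons_iff x u).2 ⟨hx, hu⟩))
    (column_mem_columnLattice ((noLoop_cons_iff y u).2 ⟨hy, hu⟩))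
  rwa [column_cons u hx, column_cons u hy, add_sub_add_left_eq_sub] at h

theorem single_sub_single_mem (hS : 3 ≤ S) (n : ℕ) (p q : {p : Fin S × Fin S // p.1 ≠ p.2}) :
    Pi.single p 1 - Pi.single q 1 ∈ columnLattice S (n + 2) := by
  obtain ⟨⟨i, j⟩, hij⟩ := p
  obtain ⟨⟨k, l⟩, hkl⟩ := q
  have hcard : #({i, k} : Finset (Fin S)) < #(univ : Finset (Fin S)) :=
    card_le_two.trans_lt (by rw [card_univ, Fintype.card_fin]; omega)
  obtain ⟨c, -, hc⟩ := exists_mem_notMem_of_card_lt_card hcard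
  simp only [mem_insert, mem_singleton, not_or] at hc
  have h := add_mem (add_mem (single_sub_single_mem_of_fst_eq n hij (Ne.symm hc.1))
    (single_sub_single_mem_of_snd_eq n (Ne.symm hc.1) (Ne.symm hc.2)))
    (single_sub_single_mem_of_fst_eq n (Ne.symm hc.2) hkl)
  rwa [sub_add_sub_cancel, sub_add_sub_cancel] at h

theorem dvd_sum_of_mem_columnLattice {n : ℕ} {y : {p : Fin S × Fin S // p.1 ≠ p.2} → ℤ}
    (hy : y ∈ columnLattice S (n + 1)) : (n : ℤ) ∣ ∑ p, y p := by
  induction hy using AddSubgroup.closure_induction with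
  | mem _ hv =>
    obtain ⟨w, hw, rfl⟩ := hv
    exact (sum_column hw).symm ▸ dvd_rfl
  | zero => simp
  | add _ _ _ _ ha hb => simpa only [Pi.add_apply, sum_add_distrib] using dvd_add ha hb
  | neg _ _ ha => simpa only [Pi.neg_apply, sum_neg_distrib] using ha.neg_right

theorem mem_columnLattice_of_dvd_sum (hS : 3 ≤ S) (n : ℕ)
    {y : {p : Fin S × Fin S // p.1 ≠ p.2} → ℤ} (hy : ((n + 1 : ℕ) : ℤ) ∣ ∑ p, y p) :
    y ∈ columnLattice S (n + 2) := by
  obtain ⟨c, hc⟩ := hy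
  have h01 : (⟨0, by omega⟩ : Fin S) ≠ ⟨1, by omega⟩ := by simp
  obtain ⟨w, hw, -⟩ := exists_noLoop_last (n + 1) h01
  have hsum : ∑ p, (y - c • column S (n + 2) w) p = 0 := by
    simp only [Pi.sub_apply, Pi.smul_apply, smul_eq_mul, sum_sub_distrib, ← mul_sum,
      sum_column hw, hc]
    ring
  have hdiff :=
    AddSubgroup.mem_of_sum_eq_zero ⟨(_, _), h01⟩ (single_sub_single_mem hS n · _) hsum
  simpa using add_mem hdiff (zsmul_mem (column_mem_columnLattice hw) c)

theorem mem_columnLattice_iff (hS : 3 ≤ S) (n : ℕ)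
    {y : {p : Fin S × Fin S // p.1 ≠ p.2} → ℤ} :
    y ∈ columnLattice S (n + 2) ↔ ((n + 1 : ℕ) : ℤ) ∣ ∑ p, y p :=
  ⟨dvd_sum_of_mem_columnLattice, mem_columnLattice_of_dvd_sum hS n⟩

end Lattice

/-- For the THMC model without initial parameters and without self-loops, an integer
vector lies in the lattice generated by the columns of the design matrix iff its
coordinate sum is divisible by `T - 1`. -/
theorem stmt5 (S T : ℕ) (hS : 3 ≤ S) (hT : 4 ≤ T)
    (y : {p : Fin S × Fin S // p.1 ≠ p.2} → ℤ) :
    y ∈ AddSubgroup.closure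
      {v : {p : Fin S × Fin S // p.1 ≠ p.2} → ℤ | ∃ w : Fin T → Fin S, NoLoop S T w ∧
        v = fun p => (trCount S T w p.1 : ℤ)} ↔
    ((T : ℤ) - 1) ∣ ∑ p : {p : Fin S × Fin S // p.1 ≠ p.2}, y p := by
  obtain ⟨n, rfl⟩ : ∃ n, T = n + 2 := ⟨T - 2, by omega⟩
  have hT' : ((n + 2 : ℕ) : ℤ) - 1 = ((n + 1 : ℕ) : ℤ) := by push_cast; ring
  rw [hT']
  exact mem_columnLattice_iff hS n
end

section
/- Fix S ≥ 2 and T ≥ 3. Let A be the transition-count design matrix of the THMC model without initial parameters. The vector h ∈ ℤ^{S²} with h_{(1,1)} = 1, h_{(2,2)} = T−2, and all other coordinates 0, lies in the lattice ℤA and in the rational cone generated by the columns of A, but is not a nonnegative integer combination of the columns of A. In particular the semigroup ℕA is not normal (not saturated in its lattice). -/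
-- total transitions
lemma trCount_total (S T : ℕ) (hT : 3 ≤ T) (w : Fin T → Fin S) :
    ∑ p : Fin S × Fin S, trCount S T w p = T - 1 := by
  classical
  have := Finset.card_eq_sum_card_fiberwise
    (f := fun t : Fin (T-1) => ((w ⟨t.1, by have := t.2; omega⟩, w ⟨t.1 + 1, by have := t.2; omega⟩) : Fin S × Fin S))
    (s := Finset.univ) (t := Finset.univ) (fun x _ => Finset.mem_univ _)
  simp only [Finset.card_univ, Fintype.card_fin] at this
  rw [this]
  unfold trCount
  apply Finset.sum_congr rfl
  intro p _
  congr 1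
  apply Finset.filter_congr
  intro t _
  simp [Prod.ext_iff]

lemma trCount_const (S T : ℕ) (c : Fin S) (p : Fin S × Fin S) :
    trCount S T (fun _ => c) p = if p = (c, c) then T - 1 else 0 := by
  unfold trCount
  by_cases hp : p = (c, c)
  · subst hp; simp
  · rw [Finset.filter_false_of_mem, Finset.card_empty]
    · simp [hp]
    · intro t _ ht
      exact hp (by obtain ⟨h1, h2⟩ := ht; rw [Prod.ext_iff]; exact ⟨h1.symm, h2.symm⟩)


lemma card_val_eq (n k : ℕ) (hk : k < n) :
    (Finset.univ.filter (fun t : Fin n => t.1 = k)).card = 1 := by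
  rw [show (Finset.univ.filter (fun t : Fin n => t.1 = k)) = {⟨k, hk⟩} from by
    ext t; simp [Fin.ext_iff]]
  simp

lemma card_val_ne (n : ℕ) (hn : 0 < n) :
    (Finset.univ.filter (fun t : Fin n => t.1 ≠ 0)).card = n - 1 := by
  rw [show (Finset.univ.filter (fun t : Fin n => t.1 ≠ 0))
      = Finset.univ.erase (⟨0, hn⟩ : Fin n) from by ext t; simp [Fin.ext_iff]]
  rw [Finset.card_erase_of_mem (Finset.mem_univ _)]
  simp

lemma card_val_ge2 (n : ℕ) (hn : 2 ≤ n) :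
    (Finset.univ.filter (fun t : Fin n => 2 ≤ t.1)).card = n - 2 := by
  rw [show (Finset.univ.filter (fun t : Fin n => 2 ≤ t.1))
      = Finset.univ \ {(⟨0, by omega⟩ : Fin n), ⟨1, by omega⟩} from by
    ext t; simp [Fin.ext_iff]; omega]
  rw [Finset.card_sdiff_of_subset (by simp)]
  rw [Finset.card_pair (by simp [Fin.ext_iff])]
  simp

lemma card_false (n : ℕ) (P : Fin n → Prop) [DecidablePred P] (h : ∀ t, ¬ P t) :
    (Finset.univ.filter P).card = 0 := by
  rw [Finset.filter_false_of_mem (fun t _ => h t)]; simp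

lemma trCount_step1 (S T : ℕ) (hT : 3 ≤ T) (e0 e1 : Fin S) (hne : e0 ≠ e1) (p : Fin S × Fin S) :
    trCount S T (fun t => if (t : ℕ) = 0 then e0 else e1) p
      = if p = (e0, e1) then 1 else if p = (e1, e1) then T - 2 else 0 := by
  obtain ⟨a, b⟩ := p
  unfold trCount
  simp only [Prod.mk.injEq]
  by_cases hb : b = e1
  · by_cases ha : a = e0
    · rw [Finset.filter_congr (q := fun t : Fin (T-1) => t.1 = 0)
        (fun t _ => by rcases eq_or_ne (t.1 : ℕ) 0 with h0 | h0 <;>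
          simp [ha, hb, h0, hne, hne.symm])]
      rw [card_val_eq _ _ (by omega)]
      simp [ha, hb]
    · by_cases ha1 : a = e1
      · rw [Finset.filter_congr (q := fun t : Fin (T-1) => t.1 ≠ 0)
          (fun t _ => by rcases eq_or_ne (t.1 : ℕ) 0 with h0 | h0 <;>
            simp [ha1, hb, h0, hne, hne.symm])]
        rw [card_val_ne _ (by omega)]
        rw [if_neg (by simp; intro h; exact absurd h ha), if_pos (by simp [ha1, hb])]
        omega
      · rw [card_false _ _ (fun t => by
          rintro ⟨h1, -⟩
          split at h1
          · exact ha h1.symm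
          · exact ha1 h1.symm)]
        rw [if_neg (by simp; intro h; exact absurd h ha),
          if_neg (by simp; intro h; exact absurd h ha1)]
  · rw [card_false _ _ (fun t => by
      rintro ⟨-, h2⟩
      rw [if_neg (by simp)] at h2
      exact hb h2.symm)]
    rw [if_neg (by simp; intro _ h; exact absurd h hb),
      if_neg (by simp; intro _ h; exact absurd h hb)]

lemma trCount_step2 (S T : ℕ) (hT : 3 ≤ T) (e0 e1 : Fin S) (hne : e0 ≠ e1) (p : Fin S × Fin S) :
    trCount S T (fun t => if (t : ℕ) ≤ 1 then e0 else e1) p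
      = if p = (e0, e0) then 1 else if p = (e0, e1) then 1
        else if p = (e1, e1) then T - 3 else 0 := by
  obtain ⟨a, b⟩ := p
  unfold trCount
  simp only [Prod.mk.injEq]
  by_cases ha : a = e0
  · by_cases hb : b = e0
    · rw [Finset.filter_congr (q := fun t : Fin (T-1) => t.1 = 0)
        (fun t _ => by
          have h3 : (t.1 : ℕ) = 0 ∨ (t.1 : ℕ) = 1 ∨ 2 ≤ (t.1 : ℕ) := by omega
          rcases h3 with h | h | h
          · simp [h, ha, hb]
          · simp [h, ha, hb, hne, hne.symm]
          · simp [show ¬((t.1 : ℕ) ≤ 1) from by omega, show (t.1 : ℕ) ≠ 0 from by omega,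
              ha, hb, hne, hne.symm])]
      rw [card_val_eq _ _ (by omega)]
      simp [ha, hb]
    · by_cases hb1 : b = e1
      · rw [Finset.filter_congr (q := fun t : Fin (T-1) => t.1 = 1)
          (fun t _ => by
            have h3 : (t.1 : ℕ) = 0 ∨ (t.1 : ℕ) = 1 ∨ 2 ≤ (t.1 : ℕ) := by omega
            rcases h3 with h | h | h
            · simp [h, ha, hb1, hne, hne.symm]
            · simp [h, ha, hb1]
            · simp [show ¬((t.1 : ℕ) ≤ 1) from by omega, show (t.1 : ℕ) ≠ 0 from by omega,
                show (t.1 : ℕ) ≠ 1 from by omega, ha, hb1, hne, hne.symm])]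
        rw [card_val_eq _ _ (by omega)]
        rw [if_neg (by simp [ha]; intro h; exact absurd h hb), if_pos (by simp [ha, hb1])]
      · rw [card_false _ _ (fun t => by
          rintro ⟨-, h2⟩
          split at h2
          · exact hb h2.symm
          · exact hb1 h2.symm)]
        rw [if_neg (by simp [ha]; intro h; exact absurd h hb),
          if_neg (by simp [ha]; intro h; exact absurd h hb1),
          if_neg (by simp; intro _ h; exact absurd h hb1)]
  · by_cases ha1 : a = e1
    · by_cases hb1 : b = e1
      · rw [Finset.filter_congr (q := fun t : Fin (T-1) => 2 ≤ t.1)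
          (fun t _ => by
            have h3 : (t.1 : ℕ) = 0 ∨ (t.1 : ℕ) = 1 ∨ 2 ≤ (t.1 : ℕ) := by omega
            rcases h3 with h | h | h
            · simp [h, ha1, hb1, hne, hne.symm]
            · simp [h, ha1, hb1, hne, hne.symm]
            · simp [show ¬((t.1 : ℕ) ≤ 1) from by omega, show (t.1 : ℕ) ≠ 0 from by omega,
                ha1, hb1, h])]
        rw [card_val_ge2 _ (by omega)]
        rw [if_neg (by simp; intro h; exact absurd h ha), if_neg (by simp; intro h; exact absurd h ha),
          if_pos (by simp [ha1, hb1])]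
        omega
      · rw [card_false _ _ (fun t => by
          rintro ⟨h1, h2⟩
          split at h2
          · next h0 =>
            have h0' : (t.1 : ℕ) + 1 ≤ 1 := by simpa using h0
            split at h1
            · exact ha h1.symm
            · next hc => exact hc (by omega)
          · exact hb1 h2.symm)]
        rw [if_neg (by simp; intro h; exact absurd h ha), if_neg (by simp; intro h; exact absurd h ha),
          if_neg (by simp [ha1]; intro h; exact absurd h hb1)]
    · rw [card_false _ _ (fun t => by
        rintro ⟨h1, -⟩
        split at h1
        · exact ha h1.symm
        · exact ha1 h1.symm)]
      rw [if_neg (by simp; intro h; exact absurd h ha), if_neg (by simp; intro h; exact absurd h ha),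
        if_neg (by simp; intro h; exact absurd h ha1)]

/-- The vector `h` with `h_(1,1) = 1`, `h_(2,2) = T-2` and all other coordinates `0`
lies in the lattice `ℤA` and in the real cone generated by the columns of the design
matrix of the THMC model without initial parameters, but is not a nonnegative integer
combination of the columns; in particular the semigroup `ℕA` is not normal. -/
theorem stmt7 (S T : ℕ) (hS : 2 ≤ S) (hT : 3 ≤ T)
    (h : Fin S × Fin S → ℤ)
    (hdef : h = fun p =>
      if p = ((⟨0, by omega⟩ : Fin S), (⟨0, by omega⟩ : Fin S)) then 1
      else if p = ((⟨1, by omega⟩ : Fin S), (⟨1, by omega⟩ : Fin S)) then (T : ℤ) - 2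
      else 0) :
    (h ∈ AddSubgroup.closure
        {v : Fin S × Fin S → ℤ | ∃ w : Fin T → Fin S,
          v = fun p => (trCount S T w p : ℤ)}) ∧
    (∃ lam : (Fin T → Fin S) → ℝ, (∀ w, 0 ≤ lam w) ∧
      ∀ p, (h p : ℝ) = ∑ w : Fin T → Fin S, lam w * (trCount S T w p : ℝ)) ∧
    (¬ ∃ n : (Fin T → Fin S) → ℕ,
      ∀ p, h p = ∑ w : Fin T → Fin S, (n w : ℤ) * (trCount S T w p : ℤ)) ∧
    ¬ (∀ x : Fin S × Fin S → ℤ,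
        x ∈ AddSubgroup.closure
          {v : Fin S × Fin S → ℤ | ∃ w : Fin T → Fin S,
            v = fun p => (trCount S T w p : ℤ)} →
        (∃ lam : (Fin T → Fin S) → ℝ, (∀ w, 0 ≤ lam w) ∧
          ∀ p, (x p : ℝ) = ∑ w : Fin T → Fin S, lam w * (trCount S T w p : ℝ)) →
        ∃ n : (Fin T → Fin S) → ℕ,
          ∀ p, x p = ∑ w : Fin T → Fin S, (n w : ℤ) * (trCount S T w p : ℤ)) := by
  have hne : (⟨0, by omega⟩ : Fin S) ≠ (⟨1, by omega⟩ : Fin S) := by simp [Fin.ext_iff]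
  have part1 : h ∈ AddSubgroup.closure
      {v : Fin S × Fin S → ℤ | ∃ w : Fin T → Fin S,
        v = fun p => (trCount S T w p : ℤ)} := by
    have key : h = ((fun p => (trCount S T (fun t => if (t : ℕ) ≤ 1 then (⟨0, by omega⟩ : Fin S) else ⟨1, by omega⟩) p : ℤ))
        + (fun p => (trCount S T (fun _ => (⟨1, by omega⟩ : Fin S)) p : ℤ)))
        - (fun p => (trCount S T (fun t => if (t : ℕ) = 0 then (⟨0, by omega⟩ : Fin S) else ⟨1, by omega⟩) p : ℤ)) := by
      funext p
      rw [hdef]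
      simp only [Pi.add_apply, Pi.sub_apply]
      rw [trCount_step2 S T hT _ _ hne p, trCount_const S T _ p, trCount_step1 S T hT _ _ hne p]
      simp only [Prod.ext_iff, Fin.ext_iff]
      split_ifs <;> omega
    rw [key]
    exact AddSubgroup.sub_mem _
      (AddSubgroup.add_mem _ (AddSubgroup.subset_closure ⟨_, rfl⟩)
        (AddSubgroup.subset_closure ⟨_, rfl⟩))
      (AddSubgroup.subset_closure ⟨_, rfl⟩)
  have part2 : (∃ lam : (Fin T → Fin S) → ℝ, (∀ w, 0 ≤ lam w) ∧
      ∀ p, (h p : ℝ) = ∑ w : Fin T → Fin S, lam w * (trCount S T w p : ℝ)) := by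
    have hTr : (3 : ℝ) ≤ (T : ℝ) := by exact_mod_cast hT
    have hT1 : (0 : ℝ) < (T : ℝ) - 1 := by linarith
    refine ⟨fun w => if w = (fun _ => (⟨0, by omega⟩ : Fin S)) then 1 / ((T : ℝ) - 1)
      else if w = (fun _ => (⟨1, by omega⟩ : Fin S)) then ((T : ℝ) - 2) / ((T : ℝ) - 1)
      else 0, ?_, ?_⟩
    · intro w
      dsimp only
      split_ifs <;> first | positivity | (apply div_nonneg <;> linarith)
    · intro p
      have hwne : (fun _ : Fin T => (⟨0, by omega⟩ : Fin S)) ≠ (fun _ => (⟨1, by omega⟩ : Fin S)) :=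
        fun hh => hne (congrFun hh ⟨0, by omega⟩)
      rw [show (∑ w : Fin T → Fin S, (if w = (fun _ => (⟨0, by omega⟩ : Fin S)) then 1 / ((T : ℝ) - 1)
          else if w = (fun _ => (⟨1, by omega⟩ : Fin S)) then ((T : ℝ) - 2) / ((T : ℝ) - 1)
          else 0) * (trCount S T w p : ℝ))
          = ∑ w ∈ ({(fun _ => (⟨0, by omega⟩ : Fin S)), (fun _ => (⟨1, by omega⟩ : Fin S))} :
              Finset (Fin T → Fin S)), (if w = (fun _ => (⟨0, by omega⟩ : Fin S)) then 1 / ((T : ℝ) - 1)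
          else if w = (fun _ => (⟨1, by omega⟩ : Fin S)) then ((T : ℝ) - 2) / ((T : ℝ) - 1)
          else 0) * (trCount S T w p : ℝ) from
        (Finset.sum_subset (Finset.subset_univ _) (fun w _ hw => by
          rw [Finset.mem_insert, Finset.mem_singleton] at hw
          push_neg at hw
          rw [if_neg hw.1, if_neg hw.2, zero_mul])).symm]
      rw [Finset.sum_pair hwne]
      rw [if_pos rfl, if_neg (Ne.symm hwne), if_pos rfl]
      rw [trCount_const S T _ p, trCount_const S T _ p, hdef]
      have hcast : ((T - 1 : ℕ) : ℝ) = (T : ℝ) - 1 := by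
        rw [Nat.cast_sub (by omega)]; norm_num
      simp only [Prod.ext_iff, Fin.ext_iff]
      split_ifs <;>
        first
          | (exfalso; omega)
          | ((try simp only [hcast]); push_cast; field_simp [hT1.ne']; try ring)
  have part3 : ¬ ∃ n : (Fin T → Fin S) → ℕ,
      ∀ p, h p = ∑ w : Fin T → Fin S, (n w : ℤ) * (trCount S T w p : ℤ) := by
    rintro ⟨n, hn⟩
    have htotZ : ∀ w : Fin T → Fin S, ∑ p : Fin S × Fin S, (trCount S T w p : ℤ) = (T : ℤ) - 1 := by
      intro w
      rw [← Nat.cast_sum, trCount_total S T hT w]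
      omega
    have hpairne : (((⟨0, by omega⟩ : Fin S), (⟨0, by omega⟩ : Fin S)) : Fin S × Fin S)
        ≠ ((⟨1, by omega⟩ : Fin S), (⟨1, by omega⟩ : Fin S)) := by
      simp [Prod.ext_iff, Fin.ext_iff]
    have hsumh : ∑ p : Fin S × Fin S, h p = (T : ℤ) - 1 := by
      rw [hdef]
      rw [show (∑ p : Fin S × Fin S, (if p = ((⟨0, by omega⟩ : Fin S), (⟨0, by omega⟩ : Fin S)) then (1:ℤ)
            else if p = ((⟨1, by omega⟩ : Fin S), (⟨1, by omega⟩ : Fin S)) then (T : ℤ) - 2 else 0))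
          = ∑ p ∈ ({((⟨0, by omega⟩ : Fin S), (⟨0, by omega⟩ : Fin S)),
              ((⟨1, by omega⟩ : Fin S), (⟨1, by omega⟩ : Fin S))} : Finset (Fin S × Fin S)),
            (if p = ((⟨0, by omega⟩ : Fin S), (⟨0, by omega⟩ : Fin S)) then (1:ℤ)
            else if p = ((⟨1, by omega⟩ : Fin S), (⟨1, by omega⟩ : Fin S)) then (T : ℤ) - 2 else 0) from
        (Finset.sum_subset (Finset.subset_univ _) (fun p _ hp => by
          rw [Finset.mem_insert, Finset.mem_singleton] at hp
          push_neg at hp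
          rw [if_neg hp.1, if_neg hp.2])).symm]
      rw [Finset.sum_pair hpairne, if_pos rfl, if_neg (Ne.symm hpairne), if_pos rfl]
      ring
    have key : (∑ w : Fin T → Fin S, (n w : ℤ)) * ((T : ℤ) - 1) = (T : ℤ) - 1 := by
      rw [Finset.sum_mul]
      calc ∑ w : Fin T → Fin S, (n w : ℤ) * ((T : ℤ) - 1)
          = ∑ w : Fin T → Fin S, ∑ p : Fin S × Fin S, (n w : ℤ) * (trCount S T w p : ℤ) := by
            refine Finset.sum_congr rfl fun w _ => ?_
            rw [← Finset.mul_sum, htotZ w]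
        _ = ∑ p : Fin S × Fin S, ∑ w : Fin T → Fin S, (n w : ℤ) * (trCount S T w p : ℤ) :=
            Finset.sum_comm
        _ = ∑ p : Fin S × Fin S, h p := Finset.sum_congr rfl fun p _ => (hn p).symm
        _ = (T : ℤ) - 1 := hsumh
    have hTne : (T : ℤ) - 1 ≠ 0 := by omega
    have hsum1Z : ∑ w : Fin T → Fin S, (n w : ℤ) = 1 := by
      have := mul_right_cancel₀ hTne (key.trans (one_mul ((T : ℤ) - 1)).symm)
      exact this
    have hsum1 : ∑ w : Fin T → Fin S, n w = 1 := by exact_mod_cast hsum1Z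
    obtain ⟨w0, hw0⟩ : ∃ w, n w ≠ 0 := by
      by_contra hc
      push_neg at hc
      rw [Finset.sum_eq_zero (fun w _ => hc w)] at hsum1
      exact one_ne_zero hsum1.symm
    have hn1 : n w0 = 1 := by
      have hle : n w0 ≤ 1 := hsum1 ▸ Finset.single_le_sum
        (fun (w : Fin T → Fin S) _ => Nat.zero_le (n w)) (Finset.mem_univ w0)
      omega
    have hzero : ∀ w, w ≠ w0 → n w = 0 := by
      intro w hw
      have hadd : n w0 + ∑ x ∈ Finset.univ.erase w0, n x = 1 := by
        rw [Finset.add_sum_erase _ n (Finset.mem_univ w0)]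
        exact hsum1
      have hez : ∑ x ∈ Finset.univ.erase w0, n x = 0 := by omega
      exact (Finset.sum_eq_zero_iff.mp hez) w (Finset.mem_erase.mpr ⟨hw, Finset.mem_univ w⟩)
    have hhw : ∀ p, h p = (trCount S T w0 p : ℤ) := by
      intro p
      rw [hn p, Finset.sum_eq_single w0]
      · rw [hn1]; ring
      · intro w _ hw; rw [hzero w hw]; ring
      · intro hh; exact absurd (Finset.mem_univ w0) hh
    have hstep : ∀ t : Fin (T - 1),
        w0 ⟨t.1, by have := t.2; omega⟩ = w0 ⟨t.1 + 1, by have := t.2; omega⟩ := by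
      intro t
      have hpos : trCount S T w0
          (w0 ⟨t.1, by have := t.2; omega⟩, w0 ⟨t.1 + 1, by have := t.2; omega⟩) ≠ 0 := by
        unfold trCount
        exact Finset.card_ne_zero_of_mem (Finset.mem_filter.mpr ⟨Finset.mem_univ t, rfl, rfl⟩)
      have hne0 : h (w0 ⟨t.1, by have := t.2; omega⟩, w0 ⟨t.1 + 1, by have := t.2; omega⟩) ≠ 0 := by
        rw [hhw]
        exact_mod_cast Nat.cast_ne_zero.mpr hpos
      simp only [hdef] at hne0
      split_ifs at hne0 with hp1 hp2
      · rw [Prod.ext_iff] at hp1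
        exact hp1.1.trans hp1.2.symm
      · rw [Prod.ext_iff] at hp2
        exact hp2.1.trans hp2.2.symm
      · exact absurd rfl hne0
    have hconst : ∀ i : ℕ, ∀ hi : i < T, w0 ⟨i, hi⟩ = w0 ⟨0, by omega⟩ := by
      intro i
      induction i with
      | zero => intro hi; rfl
      | succ j ih =>
        intro hi
        have hj : j < T - 1 := by omega
        exact ((hstep ⟨j, hj⟩).symm.trans (ih (by omega)) : _)
    have h00 : trCount S T w0 ((⟨0, by omega⟩ : Fin S), (⟨0, by omega⟩ : Fin S)) ≠ 0 := by
      have hh := hhw ((⟨0, by omega⟩ : Fin S), (⟨0, by omega⟩ : Fin S))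
      simp only [hdef] at hh
      rw [if_pos trivial] at hh
      intro hz
      rw [hz] at hh
      simp at hh
    have h11 : trCount S T w0 ((⟨1, by omega⟩ : Fin S), (⟨1, by omega⟩ : Fin S)) ≠ 0 := by
      have hh := hhw ((⟨1, by omega⟩ : Fin S), (⟨1, by omega⟩ : Fin S))
      simp only [hdef] at hh
      rw [if_pos trivial] at hh
      intro hz
      rw [hz] at hh
      simp at hh
      omega
    unfold trCount at h00 h11
    obtain ⟨t0, ht0⟩ := Finset.card_ne_zero.mp h00
    obtain ⟨t1, ht1⟩ := Finset.card_ne_zero.mp h11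
    have hv0 : w0 ⟨0, by omega⟩ = (⟨0, by omega⟩ : Fin S) :=
      (hconst t0.1 (by have := t0.2; omega)).symm.trans (Finset.mem_filter.mp ht0).2.1
    have hv1 : w0 ⟨0, by omega⟩ = (⟨1, by omega⟩ : Fin S) :=
      (hconst t1.1 (by have := t1.2; omega)).symm.trans (Finset.mem_filter.mp ht1).2.1
    exact hne (hv0.symm.trans hv1)
  exact ⟨part1, part2, part3, fun H => part3 (H h part1 part2)⟩
end

section
/- For S = 2 and T ≥ 3, the vector h = (1, 0, 0, T−2) ∈ ℤ⁴ (coordinates indexed by transitions (1,1),(1,2),(2,1),(2,2)) is not expressible as a nonnegative integer combination of transition-count vectors of words in {1,2}^T, because any word contributing a transition (1,1) and a transition (2,2) must also contribute a transition (1,2) or (2,1). -/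
/-- For `S = 2` and `T ≥ 3`, the vector `(1, 0, 0, T-2)` is not a nonnegative integer
combination of the transition-count vectors of words in `{1,2}^T`. -/
theorem stmt8 (T : ℕ) (hT : 3 ≤ T) :
    ¬ ∃ n : (Fin T → Fin 2) → ℕ,
      ∀ p : Fin 2 × Fin 2,
        ∑ w : Fin T → Fin 2, n w * trCount 2 T w p =
          if p = ((0 : Fin 2), (0 : Fin 2)) then 1
          else if p = ((1 : Fin 2), (1 : Fin 2)) then T - 2
          else 0 := by
  rintro ⟨n, hn⟩
  have h01 := hn ((0 : Fin 2), (1 : Fin 2))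
  have h10 := hn ((1 : Fin 2), (0 : Fin 2))
  have h00 := hn ((0 : Fin 2), (0 : Fin 2))
  rw [if_neg (by decide), if_neg (by decide)] at h01
  rw [if_neg (by decide), if_neg (by decide)] at h10
  rw [if_pos rfl] at h00
  -- find a word with nonzero coefficient and a (0,0) transition
  have hex : ∃ w : Fin T → Fin 2, n w * trCount 2 T w ((0 : Fin 2), (0 : Fin 2)) ≠ 0 := by
    by_contra h
    push_neg at h
    rw [Finset.sum_eq_zero (fun w _ => h w)] at h00
    exact absurd h00 (by omega)
  obtain ⟨w, hw⟩ := hex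
  obtain ⟨hnw, htr⟩ := mul_ne_zero_iff.mp hw
  -- coefficient-weighted terms for (0,1) and (1,0) vanish, so trCounts vanish
  have hz01 : trCount 2 T w ((0 : Fin 2), (1 : Fin 2)) = 0 := by
    have := (Finset.sum_eq_zero_iff.mp h01) w (Finset.mem_univ w)
    exact (Nat.mul_eq_zero.mp this).resolve_left hnw
  have hz10 : trCount 2 T w ((1 : Fin 2), (0 : Fin 2)) = 0 := by
    have := (Finset.sum_eq_zero_iff.mp h10) w (Finset.mem_univ w)
    exact (Nat.mul_eq_zero.mp this).resolve_left hnw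
  -- hence all consecutive letters are equal
  unfold trCount at hz01 hz10 htr
  have hAdj : ∀ t : Fin (T - 1),
      w ⟨t.1, by have := t.2; omega⟩ = w ⟨t.1 + 1, by have := t.2; omega⟩ := by
    intro t
    have h1 := Finset.filter_eq_empty_iff.mp (Finset.card_eq_zero.mp hz01) (Finset.mem_univ t)
    have h2 := Finset.filter_eq_empty_iff.mp (Finset.card_eq_zero.mp hz10) (Finset.mem_univ t)
    simp only [not_and] at h1 h2
    have htwo : ∀ x : Fin 2, x = 0 ∨ x = 1 := by decide
    rcases htwo (w ⟨t.1, by have := t.2; omega⟩) with ha | ha <;>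
      rcases htwo (w ⟨t.1 + 1, by have := t.2; omega⟩) with hb | hb <;>
      simp_all
  -- so w is constant
  have hconst : ∀ k (hk : k < T), w ⟨k, hk⟩ = w ⟨0, by omega⟩ := by
    intro k
    induction k with
    | zero => intro hk; rfl
    | succ m ih =>
      intro hk
      exact (hAdj ⟨m, by omega⟩).symm.trans (ih (by omega))
  -- and w takes value 0 somewhere, hence everywhere
  have hsome : ∃ t : Fin (T - 1), w ⟨t.1, by have := t.2; omega⟩ = 0 ∧
      w ⟨t.1 + 1, by have := t.2; omega⟩ = 0 := by
    obtain ⟨t, ht⟩ := Finset.card_pos.mp (Nat.pos_of_ne_zero htr)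
    simp only [Finset.mem_filter, Finset.mem_univ, true_and] at ht
    exact ⟨t, ht⟩
  have hzero : ∀ k (hk : k < T), w ⟨k, hk⟩ = 0 := by
    obtain ⟨t, ht, _⟩ := hsome
    intro k hk
    rw [hconst k hk, ← hconst t.1 (by have := t.2; omega)]
    exact ht
  -- therefore trCount w (0,0) = T - 1
  have hcard : trCount 2 T w ((0 : Fin 2), (0 : Fin 2)) = T - 1 := by
    unfold trCount
    have : (Finset.univ.filter (fun t : Fin (T - 1) =>
        w ⟨t.1, by have := t.2; omega⟩ = ((0 : Fin 2), (0 : Fin 2)).1 ∧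
        w ⟨t.1 + 1, by have := t.2; omega⟩ = ((0 : Fin 2), (0 : Fin 2)).2)) = Finset.univ := by
      apply Finset.filter_true_of_mem
      intro t _
      exact ⟨hzero _ _, hzero _ _⟩
    rw [this, Finset.card_univ, Fintype.card_fin]
  -- but then the single term already exceeds 1
  have hle := Finset.single_le_sum (f := fun v => n v * trCount 2 T v ((0 : Fin 2), (0 : Fin 2)))
    (fun i _ => Nat.zero_le _) (Finset.mem_univ w)
  rw [h00, hcard] at hle
  have h1n : 1 ≤ n w := Nat.one_le_iff_ne_zero.mpr hnw
  have : 1 * 2 ≤ n w * (T - 1) := Nat.mul_le_mul h1n (by omega)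
  omega
end

section
/- Fix S ≥ 3 and T ≥ 4. Let A be the design matrix of the THMC model without initial parameters and without self-loops, and let C ⊆ ℝ^{S(S−1)} be the cone generated by its columns. If x ∈ ℤA ∩ C, then ∑_{i≠j} x_{ij} = k(T−1) for some k ∈ ℕ, and for every state i, |x_{i+} − x_{+i}| ≤ k, where x_{i+} = ∑_j x_{ij} and x_{+i} = ∑_j x_{ji}. -/
/-!
Write `x = ∑_w λ_w a_w` with `λ ≥ 0`, where `a_w` is the transition-count vector of the word `w`.
Every column has total `T - 1`, so membership in `ℤA` makes `T - 1` divide the total of `x`, and the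
quotient is `k = ∑_w λ_w ≥ 0`. Along a word without self-loops the out-degree minus the in-degree of
`a_w` at `i` telescopes to `[w₀ = i] - [w_{T-1} = i] ∈ [-1, 1]`, so the imbalance of `x` at `i` is at
most `∑_w λ_w = k`.
-/

open Finset

section Cone

variable {ι κ : Type*} [Fintype ι] [Fintype κ]

lemma dvd_sum_of_mem_closure {s : Set (ι → ℤ)} {c : ℤ} (hs : ∀ v ∈ s, c ∣ ∑ p, v p)
    {x : ι → ℤ} (hx : x ∈ AddSubgroup.closure s) : c ∣ ∑ p, x p := by
  induction hx using AddSubgroup.closure_induction with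
  | mem v hv => exact hs v hv
  | zero => simp
  | add a b _ _ ha hb => simpa [sum_add_distrib] using dvd_add ha hb
  | neg a _ ha => simpa using ha.neg_right

variable {R : Type*} [CommRing R] {x : ι → R} {a : κ → ι → R} {lam : κ → R}

lemma sum_mul_eq_of_eq_sum (hx : ∀ p, x p = ∑ w, lam w * a w p) (c : ι → R) :
    ∑ p, c p * x p = ∑ w, lam w * ∑ p, c p * a w p := by
  simp_rw [hx, mul_sum]
  rw [sum_comm]
  simp_rw [mul_left_comm]

lemma sum_eq_mul_sum_of_eq_sum (hx : ∀ p, x p = ∑ w, lam w * a w p) {d : R}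
    (ha : ∀ w, ∑ p, a w p = d) : ∑ p, x p = d * ∑ w, lam w := by
  have h := sum_mul_eq_of_eq_sum hx 1
  simp only [Pi.one_apply, one_mul, ha] at h
  rw [h, ← sum_mul, mul_comm]

lemma abs_sum_mul_le_of_eq_sum [LinearOrder R] [IsOrderedRing R] (hlam : ∀ w, 0 ≤ lam w) (hx : ∀ p, x p = ∑ w, lam w * a w p)
    {c : ι → R} (ha : ∀ w, |∑ p, c p * a w p| ≤ 1) : |∑ p, c p * x p| ≤ ∑ w, lam w := by
  rw [sum_mul_eq_of_eq_sum hx]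
  calc |∑ w, lam w * ∑ p, c p * a w p| ≤ ∑ w, |lam w * ∑ p, c p * a w p| := abs_sum_le_sum_abs _ _
    _ ≤ ∑ w, lam w := sum_le_sum fun w _ => by
        rw [abs_mul, abs_of_nonneg (hlam w)]
        exact mul_le_of_le_one_right (hlam w) (ha w)

end Cone

namespace NoLoop

variable {S T : ℕ} {w : Fin T → Fin S}

def transition (hw : NoLoop S T w) (t : Fin (T - 1)) : {p : Fin S × Fin S // p.1 ≠ p.2} :=
  ⟨(w ⟨t, by omega⟩, w ⟨t + 1, by omega⟩), hw t⟩

lemma trCount_eq_card (hw : NoLoop S T w) (p : {p : Fin S × Fin S // p.1 ≠ p.2}) :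
    trCount S T w p.1 = #{t | hw.transition t = p} := by
  simp only [trCount, transition, Subtype.ext_iff, Prod.ext_iff]

lemma sum_mul_trCount {R : Type*} [NonAssocSemiring R] (hw : NoLoop S T w)
    (g : {p : Fin S × Fin S // p.1 ≠ p.2} → R) :
    ∑ p, g p * (trCount S T w p.1 : R) = ∑ t, g (hw.transition t) := by
  rw [← sum_fiberwise univ hw.transition (fun t => g (hw.transition t))]
  refine sum_congr rfl fun p _ => ?_
  rw [trCount_eq_card hw, sum_congr rfl fun t ht => congrArg g (mem_filter.1 ht).2,
    sum_const, nsmul_eq_mul, Nat.cast_comm]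

lemma sum_trCount {R : Type*} [NonAssocSemiring R] (hw : NoLoop S T w) :
    ∑ p : {p : Fin S × Fin S // p.1 ≠ p.2}, (trCount S T w p.1 : R) = ((T - 1 : ℕ) : R) := by
  simpa using hw.sum_mul_trCount (fun _ => (1 : R))

lemma abs_sum_outDegree_sub_inDegree_le {R : Type*} [Ring R] [LinearOrder R] [IsOrderedRing R]
    (hw : NoLoop S T w) (i : Fin S) :
    |∑ p : {p : Fin S × Fin S // p.1 ≠ p.2},
      ((if p.1.1 = i then 1 else 0) - (if p.1.2 = i then 1 else 0)) * (trCount S T w p.1 : R)|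
      ≤ 1 := by
  set f : ℕ → R := fun n => if h : n < T then (if w ⟨n, h⟩ = i then 1 else 0) else 0
  have hf : ∀ n, 0 ≤ f n ∧ f n ≤ 1 := fun n => by
    simp only [f]; split_ifs <;> norm_num
  have htel : ∀ t : Fin (T - 1), (if (hw.transition t).1.1 = i then (1 : R) else 0) -
      (if (hw.transition t).1.2 = i then 1 else 0) = f t - f (t + 1) := fun t => by
    simp only [transition, f, dif_pos (show (t : ℕ) < T by omega),
      dif_pos (show (t : ℕ) + 1 < T by omega)]
    rfl
  rw [hw.sum_mul_trCount, sum_congr rfl fun t _ => htel t,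
    Fin.sum_univ_eq_sum_range (fun n => f n - f (n + 1)), sum_range_sub']
  exact abs_sub_le_of_nonneg_of_le (hf 0).1 (hf 0).2 (hf _).1 (hf _).2

end NoLoop

theorem stmt9_general (S T : ℕ) (hT : 4 ≤ T)
    (x : {p : Fin S × Fin S // p.1 ≠ p.2} → ℤ)
    (hlat : x ∈ AddSubgroup.closure
      {v : {p : Fin S × Fin S // p.1 ≠ p.2} → ℤ | ∃ w : Fin T → Fin S, NoLoop S T w ∧
        v = fun p => (trCount S T w p.1 : ℤ)})
    (hcone : ∃ lam : {w : Fin T → Fin S // NoLoop S T w} → ℝ,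
      (∀ w, 0 ≤ lam w) ∧
      ∀ p, (x p : ℝ) = ∑ w : {w : Fin T → Fin S // NoLoop S T w},
        lam w * (trCount S T w.1 p.1 : ℝ)) :
    ∃ k : ℕ, (∑ p : {p : Fin S × Fin S // p.1 ≠ p.2}, x p) = (k : ℤ) * ((T : ℤ) - 1) ∧
      ∀ i : Fin S,
        |(∑ p : {p : Fin S × Fin S // p.1 ≠ p.2}, if p.1.1 = i then x p else 0) -
          (∑ p : {p : Fin S × Fin S // p.1 ≠ p.2}, if p.1.2 = i then x p else 0)| ≤ k := by
  obtain ⟨lam, hlam, hx⟩ := hcone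
  obtain ⟨m, hm⟩ : ((T : ℤ) - 1) ∣ ∑ p, x p := by
    refine dvd_sum_of_mem_closure ?_ hlat
    rintro _ ⟨w, hw, rfl⟩
    rw [hw.sum_trCount, Nat.cast_sub (by omega), Nat.cast_one]
  have hsum : ∑ w, lam w = m := by
    have htotal := sum_eq_mul_sum_of_eq_sum hx fun w => w.2.sum_trCount
    rw [← Int.cast_sum, hm, Nat.cast_sub (by omega)] at htotal
    push_cast at htotal
    have hT1 : (T : ℝ) - 1 ≠ 0 := sub_ne_zero.2 <| Nat.cast_ne_one.2 (by omega)
    exact mul_left_cancel₀ hT1 (by linarith)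
  obtain ⟨k, rfl⟩ := Int.eq_ofNat_of_zero_le (a := m) <| by
    exact_mod_cast hsum ▸ sum_nonneg fun w _ => hlam w
  refine ⟨k, by rw [hm, mul_comm], fun i => ?_⟩
  have hdeg := abs_sum_mul_le_of_eq_sum hlam hx fun w => w.2.abs_sum_outDegree_sub_inDegree_le i
  simp only [sub_mul, ite_mul, one_mul, zero_mul, sum_sub_distrib, hsum] at hdeg
  exact_mod_cast hdeg

/-- If `x` lies in `ℤA ∩ cone(A)` for the design matrix of the THMC model without
initial parameters and without self-loops, then the total of `x` is `k(T-1)` for some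
`k ∈ ℕ` and at every state the out-degree and in-degree differ by at most `k`. -/
theorem stmt9 (S T : ℕ) (hS : 3 ≤ S) (hT : 4 ≤ T)
    (x : {p : Fin S × Fin S // p.1 ≠ p.2} → ℤ)
    (hlat : x ∈ AddSubgroup.closure
      {v : {p : Fin S × Fin S // p.1 ≠ p.2} → ℤ | ∃ w : Fin T → Fin S, NoLoop S T w ∧
        v = fun p => (trCount S T w p.1 : ℤ)})
    (hcone : ∃ lam : {w : Fin T → Fin S // NoLoop S T w} → ℝ,
      (∀ w, 0 ≤ lam w) ∧
      ∀ p, (x p : ℝ) = ∑ w : {w : Fin T → Fin S // NoLoop S T w},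
        lam w * (trCount S T w.1 p.1 : ℝ)) :
    ∃ k : ℕ, (∑ p : {p : Fin S × Fin S // p.1 ≠ p.2}, x p) = (k : ℤ) * ((T : ℤ) - 1) ∧
      ∀ i : Fin S,
        |(∑ p : {p : Fin S × Fin S // p.1 ≠ p.2}, if p.1.1 = i then x p else 0) -
          (∑ p : {p : Fin S × Fin S // p.1 ≠ p.2}, if p.1.2 = i then x p else 0)| ≤ k :=
  stmt9_general S T hT x hlat hcone
end

section
/- Let S = 3, T ≥ 1, and let x ∈ ℕ⁶ be a transition-count vector of some word in [3]^T_{NL} such that the multigraph G(x) contains a 2-cycle i→j→i and a 2-cycle k→l→k with {i,j} ≠ {k,l}. Then x is not a vertex of the polytope P = conv{A_w : w ∈ [3]^T_{NL}}; specifically, x = ½y + ½z where y = x + e_{kl} + e_{lk} − e_{ij} − e_{ji} and z = x + e_{ij} + e_{ji} − e_{kl} − e_{lk} are both in P. -/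
/-!
Exchanging the 2-cycle `i → j → i` for `k → l → k` leaves every in- and out-degree of a
transition-count vector unchanged, so the new vector still satisfies the degree condition of a
walk. On three letters the support of such a vector is automatically connected (any two edges of
a triangle join all three vertices), so by Euler's argument it is the count vector of a no-loop
word of the same length. Hence `y` and `z` lie in `P`; as `x` is their midpoint and `y ≠ x`, the
point `x` is not extreme.
-/

open Finset

namespace TransitionCount

variable {S : ℕ}

def outDeg (c : Fin S × Fin S → ℕ) (v : Fin S) : ℕ := ∑ w, c (v, w)

def inDeg (c : Fin S × Fin S → ℕ) (v : Fin S) : ℕ := ∑ w, c (w, v)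

/-- The degree condition for `c` to count the edges of a walk starting at `s`; the one-sided
form suffices because the total in- and out-degrees agree. -/
def Balanced (c : Fin S × Fin S → ℕ) (s : Fin S) : Prop :=
  ∀ v, outDeg c v ≤ inDeg c v + if v = s then 1 else 0

def twoCycle (k l : Fin S) : Fin S × Fin S → ℕ := Pi.single (k, l) 1 + Pi.single (l, k) 1

lemma twoCycle_apply (k l : Fin S) (p : Fin S × Fin S) :
    twoCycle k l p = (if p = (k, l) then 1 else 0) + (if p = (l, k) then 1 else 0) := by
  simp [twoCycle, Pi.single_apply]

lemma twoCycle_diag {k l : Fin S} (hkl : k ≠ l) (v : Fin S) : twoCycle k l (v, v) = 0 := by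
  have h₁ : (v, v) ≠ (k, l) := fun h => hkl (by cases h; rfl)
  have h₂ : (v, v) ≠ (l, k) := fun h => hkl (by cases h; rfl)
  simp only [twoCycle_apply, if_neg h₁, if_neg h₂]

lemma sum_twoCycle (k l : Fin S) : ∑ p, twoCycle k l p = 2 := by
  simp only [twoCycle, Pi.add_apply, sum_add_distrib, Fintype.sum_pi_single']

lemma twoCycle_le {c : Fin S × Fin S → ℕ} {i j : Fin S} (hne : i ≠ j) (hij : 0 < c (i, j))
    (hji : 0 < c (j, i)) (p : Fin S × Fin S) : twoCycle i j p ≤ c p := by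
  rw [twoCycle_apply]
  by_cases h₁ : p = (i, j)
  · have : (i, j) ≠ (j, i) := fun h => hne (Prod.ext_iff.1 h).1
    subst h₁; simp only [if_pos, if_neg this]; omega
  · by_cases h₂ : p = (j, i)
    · subst h₂; simp only [if_pos, if_neg h₁]; omega
    · simp only [if_neg h₁, if_neg h₂]; omega

lemma outDeg_add (c d : Fin S × Fin S → ℕ) (v : Fin S) :
    outDeg (c + d) v = outDeg c v + outDeg d v :=
  sum_add_distrib

lemma inDeg_add (c d : Fin S × Fin S → ℕ) (v : Fin S) :
    inDeg (c + d) v = inDeg c v + inDeg d v :=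
  sum_add_distrib

lemma outDeg_single (s t v : Fin S) :
    outDeg (Pi.single (s, t) 1) v = if v = s then 1 else 0 := by
  by_cases h : v = s <;> simp [outDeg, Pi.single_apply, h]

lemma inDeg_single (s t v : Fin S) :
    inDeg (Pi.single (s, t) 1) v = if v = t then 1 else 0 := by
  by_cases h : v = t <;> simp [inDeg, Pi.single_apply, h]

lemma outDeg_twoCycle (k l v : Fin S) : outDeg (twoCycle k l) v = inDeg (twoCycle k l) v := by
  simp only [twoCycle, outDeg_add, inDeg_add, outDeg_single, inDeg_single]
  omega

lemma balanced_single_add_iff {c : Fin S × Fin S → ℕ} {s t : Fin S} (hst : s ≠ t) :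
    Balanced (Pi.single (s, t) 1 + c) s ↔ Balanced c t := by
  refine forall_congr' fun v => ?_
  simp only [outDeg_add, inDeg_add, outDeg_single, inDeg_single]
  by_cases hvs : v = s <;> by_cases hvt : v = t <;> simp_all <;> omega

lemma Balanced.of_add_twoCycle_eq {c c' : Fin S × Fin S → ℕ} {s i j k l : Fin S}
    (h : Balanced c s) (heq : c' + twoCycle i j = c + twoCycle k l) : Balanced c' s := by
  intro v
  have hout := congrArg (outDeg · v) heq
  have hin := congrArg (inDeg · v) heq
  simp only [outDeg_add, outDeg_twoCycle] at hout
  simp only [inDeg_add] at hin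
  have := h v
  omega

lemma Balanced.of_outDeg_eq_zero {c : Fin S × Fin S → ℕ} {s : Fin S} (h : Balanced c s)
    (hs : outDeg c s = 0) (t : Fin S) : Balanced c t := by
  intro v
  by_cases hvs : v = s
  · subst hvs; omega
  · have := h v; simp only [hvs, if_false] at this; omega

lemma trCount_one (w : Fin 1 → Fin S) : trCount S 1 w = 0 := by
  funext p
  simp [trCount]

lemma trCount_cons {T : ℕ} (s : Fin S) (w : Fin (T + 1) → Fin S) :
    trCount S (T + 2) (Fin.cons s w) = Pi.single (s, w 0) 1 + trCount S (T + 1) w := by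
  funext p
  simp only [trCount, Pi.add_apply, Pi.single_apply, Prod.ext_iff]
  rw [card_filter, card_filter]
  show (∑ t : Fin (T + 1), if (Fin.cons s w : Fin (T + 2) → Fin S) ⟨t.1, by omega⟩ = p.1 ∧
      (Fin.cons s w : Fin (T + 2) → Fin S) ⟨t.1 + 1, by omega⟩ = p.2 then 1 else 0) = _
  rw [Fin.sum_univ_succ]
  simp only [Fin.val_zero, Fin.val_succ, eq_comm (a := p.1), eq_comm (a := p.2)]
  rfl

lemma noLoop_cons_iff {T : ℕ} (s : Fin S) (w : Fin (T + 1) → Fin S) :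
    NoLoop S (T + 2) (Fin.cons s w) ↔ s ≠ w 0 ∧ NoLoop S (T + 1) w := by
  show (∀ t : Fin (T + 1), _) ↔ _
  exact Fin.forall_fin_succ

lemma trCount_self {T : ℕ} {w : Fin T → Fin S} (hw : NoLoop S T w) (v : Fin S) :
    trCount S T w (v, v) = 0 := by
  simp only [trCount, card_eq_zero, filter_eq_empty_iff]
  exact fun t _ ⟨h₁, h₂⟩ => hw t (h₁.trans h₂.symm)

lemma sum_trCount_and_balanced {N : ℕ} {w : Fin (N + 1) → Fin S} (hw : NoLoop S (N + 1) w) :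
    ∑ p, trCount S (N + 1) w p = N ∧ Balanced (trCount S (N + 1) w) (w 0) := by
  induction N with
  | zero => simp [trCount_one, Balanced, outDeg, inDeg]
  | succ N ih =>
    obtain ⟨s, w, rfl⟩ : ∃ s w', Fin.cons s w' = w := ⟨_, _, Fin.cons_self_tail w⟩
    obtain ⟨hsw, hw'⟩ := (noLoop_cons_iff s w).1 hw
    obtain ⟨hsum, hbal⟩ := ih hw'
    rw [trCount_cons, Fin.cons_zero, balanced_single_add_iff hsw]
    refine ⟨?_, hbal⟩
    simp only [Pi.add_apply, sum_add_distrib, hsum, Fintype.sum_pi_single']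
    omega

/-- Fleury's rule on a triangle: stepping to a dead end `t` is harmful only if edges remain, and
two dead-end out-neighbours of `s`, or one with edges left elsewhere, violate the degree
condition. -/
lemma exists_step_of_balanced {N : ℕ} {c : Fin 3 × Fin 3 → ℕ} {s : Fin 3}
    (hdiag : ∀ v, c (v, v) = 0) (hbal : Balanced c s) (hs : 0 < outDeg c s)
    (hsum : ∑ p, c p = N + 1) :
    ∃ t, 0 < c (s, t) ∧ (N = 0 ∨ 0 < outDeg c t) := by
  have h0 := hbal 0
  have h1 := hbal 1
  have h2 := hbal 2
  have d0 := hdiag 0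
  have d1 := hdiag 1
  have d2 := hdiag 2
  rw [Fintype.sum_prod_type] at hsum
  fin_cases s <;>
    simp [outDeg, inDeg, Fin.sum_univ_three, Fin.exists_fin_succ] at * <;> omega

theorem exists_noLoop_trCount_eq {N : ℕ} {c : Fin 3 × Fin 3 → ℕ} {s : Fin 3}
    (hdiag : ∀ v, c (v, v) = 0) (hbal : Balanced c s) (hs : N = 0 ∨ 0 < outDeg c s)
    (hsum : ∑ p, c p = N) :
    ∃ w : Fin (N + 1) → Fin 3, NoLoop 3 (N + 1) w ∧ w 0 = s ∧ trCount 3 (N + 1) w = c := by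
  induction N generalizing c s with
  | zero =>
    have hc : c = 0 := funext fun p => (sum_eq_zero_iff.1 hsum) p (mem_univ p)
    exact ⟨fun _ => s, fun t => t.elim0, rfl, by rw [trCount_one, hc]⟩
  | succ N ih =>
    obtain ⟨t, hst, ht⟩ :=
      exists_step_of_balanced hdiag hbal (hs.resolve_left N.succ_ne_zero) hsum
    have hne : s ≠ t := by rintro rfl; simp [hdiag] at hst
    set c' := Function.update c (s, t) (c (s, t) - 1)
    have hc : c = Pi.single (s, t) 1 + c' := by
      funext p
      by_cases hp : p = (s, t)
      · subst hp; simp [c']; omega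
      · simp [c', hp]
    rw [hc] at hbal hsum ht hdiag
    simp only [Pi.add_apply, sum_add_distrib, Fintype.sum_pi_single', outDeg_add,
      outDeg_single, hne.symm, if_false, zero_add] at hsum ht hdiag
    obtain ⟨w, hw, hw0, hwc⟩ :=
      ih (fun v => by have := hdiag v; omega) ((balanced_single_add_iff hne).1 hbal) ht
        (by omega)
    refine ⟨Fin.cons s w, (noLoop_cons_iff s w).2 ⟨hw0 ▸ hne, hw⟩, rfl, ?_⟩
    rw [trCount_cons, hw0, hwc, hc]

theorem exists_noLoop_trCount_add_twoCycle {N : ℕ} {u : Fin (N + 1) → Fin 3}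
    (hu : NoLoop 3 (N + 1) u) {i j k l : Fin 3} (hkl : k ≠ l)
    (hij : 0 < trCount 3 (N + 1) u (i, j)) (hji : 0 < trCount 3 (N + 1) u (j, i)) :
    ∃ w, NoLoop 3 (N + 1) w ∧
      trCount 3 (N + 1) w + twoCycle i j = trCount 3 (N + 1) u + twoCycle k l := by
  obtain ⟨hsum, hbal⟩ := sum_trCount_and_balanced hu
  set c := trCount 3 (N + 1) u
  have hne : i ≠ j := by rintro rfl; simp [c, trCount_self hu] at hij
  have hle := twoCycle_le hne hij hji
  set c' : Fin 3 × Fin 3 → ℕ := fun p => c p + twoCycle k l p - twoCycle i j p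
  have hc' : c' + twoCycle i j = c + twoCycle k l := by
    funext p
    have := hle p
    simp only [Pi.add_apply, c']
    omega
  have hdiag : ∀ v, c' (v, v) = 0 := by
    intro v
    simp only [c', c, trCount_self hu, twoCycle_diag hkl, zero_add, zero_tsub]
  have hsum' : ∑ p, c' p = N := by
    have := congrArg (∑ p, · p) hc'
    simp only [Pi.add_apply, sum_add_distrib, sum_twoCycle] at this
    omega
  have hk : 0 < outDeg c' k := by
    have hkl' := congrFun hc' (k, l)
    have := hle (k, l)
    have := single_le_sum (f := fun w => c' (k, w)) (fun _ _ => Nat.zero_le _) (mem_univ l)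
    simp only [Pi.add_apply, twoCycle_apply k l, if_pos] at hkl'
    simp only [outDeg]
    omega
  have hbal' := hbal.of_add_twoCycle_eq hc'
  obtain ⟨s, hbal's, hs⟩ : ∃ s, Balanced c' s ∧ 0 < outDeg c' s := by
    by_cases hs : outDeg c' (u 0) = 0
    · exact ⟨k, hbal'.of_outDeg_eq_zero hs k, hk⟩
    · exact ⟨u 0, hbal', Nat.pos_of_ne_zero hs⟩
  obtain ⟨w, hw, -, hwc⟩ := exists_noLoop_trCount_eq hdiag hbal's (.inr hs) hsum'
  exact ⟨w, hw, hwc ▸ hc'⟩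

lemma cast_eq_of_add_twoCycle_eq {a b : Fin S × Fin S → ℕ} {i j k l : Fin S}
    (h : a + twoCycle i j = b + twoCycle k l) (p : Fin S × Fin S) :
    (a p : ℝ) = b p + (if p = (k, l) then 1 else 0) + (if p = (l, k) then 1 else 0)
      - (if p = (i, j) then 1 else 0) - (if p = (j, i) then 1 else 0) := by
  have hp := congrArg (fun f => (f p : ℝ)) h
  simp only [Pi.add_apply, twoCycle_apply, Nat.cast_add, Nat.cast_ite, Nat.cast_one,
    Nat.cast_zero] at hp
  linarith

end TransitionCount

open TransitionCount

/-- If the transition-count vector `x` of a no-self-loop word over three states contains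
two 2-cycles on different vertex pairs, then `x` is not a vertex of the polytope
`P = conv(A)`: explicitly `x = ½y + ½z` with `y = x + e_{kl} + e_{lk} - e_{ij} - e_{ji}`
and `z = x + e_{ij} + e_{ji} - e_{kl} - e_{lk}` both in `P`. -/
theorem stmt14 (T : ℕ) (u : Fin T → Fin 3) (hu : NoLoop 3 T u)
    (x : {p : Fin 3 × Fin 3 // p.1 ≠ p.2} → ℕ)
    (hx : ∀ p, x p = trCount 3 T u p.1)
    (i j k l : Fin 3) (hij : i ≠ j) (hkl : k ≠ l)
    (hdiff : ¬((i = k ∧ j = l) ∨ (i = l ∧ j = k)))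
    (h1 : 1 ≤ x ⟨(i, j), hij⟩) (h2 : 1 ≤ x ⟨(j, i), hij.symm⟩)
    (h3 : 1 ≤ x ⟨(k, l), hkl⟩) (h4 : 1 ≤ x ⟨(l, k), hkl.symm⟩) :
    let P := convexHull ℝ (Set.range fun w : {w : Fin T → Fin 3 // NoLoop 3 T w} =>
      fun p : {p : Fin 3 × Fin 3 // p.1 ≠ p.2} => (trCount 3 T w.1 p.1 : ℝ));
    let y : {p : Fin 3 × Fin 3 // p.1 ≠ p.2} → ℝ := fun p =>
      (x p : ℝ) + (if p.1 = (k, l) then 1 else 0) + (if p.1 = (l, k) then 1 else 0)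
        - (if p.1 = (i, j) then 1 else 0) - (if p.1 = (j, i) then 1 else 0);
    let z : {p : Fin 3 × Fin 3 // p.1 ≠ p.2} → ℝ := fun p =>
      (x p : ℝ) + (if p.1 = (i, j) then 1 else 0) + (if p.1 = (j, i) then 1 else 0)
        - (if p.1 = (k, l) then 1 else 0) - (if p.1 = (l, k) then 1 else 0);
    y ∈ P ∧ z ∈ P ∧ (∀ p, (x p : ℝ) = (1 / 2) * y p + (1 / 2) * z p) ∧
      (fun p => (x p : ℝ)) ∉ Set.extremePoints ℝ P := by
  intro P y z
  simp only [hx] at h1 h2 h3 h4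
  obtain ⟨N, rfl⟩ : ∃ N, T = N + 1 :=
    Nat.exists_eq_succ_of_ne_zero (by rintro rfl; simp [trCount] at h1)
  obtain ⟨wy, hwy, hy⟩ := exists_noLoop_trCount_add_twoCycle hu hkl h1 h2
  obtain ⟨wz, hwz, hz⟩ := exists_noLoop_trCount_add_twoCycle hu hij h3 h4
  have hmem : ∀ w, NoLoop 3 (N + 1) w → (fun p => (trCount 3 (N + 1) w p.1 : ℝ)) ∈ P :=
    fun w hw => subset_convexHull ℝ _ ⟨⟨w, hw⟩, rfl⟩
  have hyP : y ∈ P := by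
    convert hmem wy hwy using 2 with p
    simp only [y, cast_eq_of_add_twoCycle_eq hy, hx]
  have hzP : z ∈ P := by
    convert hmem wz hwz using 2 with p
    simp only [z, cast_eq_of_add_twoCycle_eq hz, hx]
  have hmid : ∀ p, (x p : ℝ) = (1 / 2) * y p + (1 / 2) * z p := fun p => by
    simp only [y, z]
    ring
  have hyx : y ≠ fun p => (x p : ℝ) := fun h => by
    have hkl' : ((i, j) : Fin 3 × Fin 3) ≠ (k, l) := fun h => hdiff (.inl (Prod.ext_iff.1 h))
    have hlk' : ((i, j) : Fin 3 × Fin 3) ≠ (l, k) := fun h => hdiff (.inr (Prod.ext_iff.1 h))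
    have hji' : ((i, j) : Fin 3 × Fin 3) ≠ (j, i) := fun h => hij (Prod.ext_iff.1 h).1
    have := congrFun h ⟨(i, j), hij⟩
    simp only [y, if_neg hkl', if_neg hlk', if_neg hji', if_pos] at this
    linarith
  refine ⟨hyP, hzP, hmid, fun hext => hyx (hext.2 hyP hzP ?_)⟩
  exact ⟨1 / 2, 1 / 2, by norm_num, by norm_num, by norm_num, funext fun p => (hmid p).symm⟩
end

section
/- Let p = ⌊(T−1)/2⌋ and for 0 ≤ 2t ≤ T−1 define f(t) = ⌊(T−1−2t)/3⌋. For S = 3 and T ≥ 13, every transition-count vector x of a word in [3]^T_{NL} whose state graph has exactly q two-cycles, all of one type, with 3 ≤ q ≤ p−3, satisfies: x is a midpoint x = ½y + ½z of two other points y, z in the polytope conv{A_w : w ∈ [3]^T_{NL}} (obtained by trading two 3-cycles for three 2-cycles and vice versa), hence x is not a vertex of the polytope. -/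
/-!
Read a word as a walk in its state graph and relabel the letters so that the 2-cycles sit on
`{0, 1}`. Vertex `2` then lies on no 2-cycle, so it is entered from only one of `0, 1` and left
only towards the other: up to swapping `0` and `1`, the walk uses just the edges `0 ⇄ 1` and
`1 → 2 → 0`, that is, copies of the 2-cycle `0 1` and of the 3-cycle `0 1 2` plus a short path.
Conversely, every count vector on these four edges that obeys the flow law of a walk is realised
by a word: splice the cycles into a short walk through `0`. The bounds on `q` leave at least
three 2-cycles and two 3-cycles, so trading two 3-cycles for three 2-cycles, and three 2-cycles
for two 3-cycles, gives two other words of the same length whose transition vectors average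
to `x`.
-/

namespace List

variable {α β : Type*}

theorem head?_flatten_replicate_append {v : α} {C l : List α} (hl : l.head? = some v) (n : ℕ) :
    ((replicate n (v :: C)).flatten ++ l).head? = some v := by
  cases n <;> simp [hl]

theorem isChain_flatten_replicate_append {R : α → α → Prop} {v : α} {C l : List α}
    (hC : (v :: C ++ [v]).IsChain R) (hl : l.IsChain R) (hl₀ : l.head? = some v) (n : ℕ) :
    ((replicate n (v :: C)).flatten ++ l).IsChain R := by
  induction n with
  | zero => simpa
  | succ n ih =>
    obtain ⟨l', hl'⟩ := head?_eq_some_iff.mp (head?_flatten_replicate_append (C := C) hl₀ n)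
    rw [replicate_succ, flatten_cons, append_assoc, hl', isChain_split, ← hl']
    exact ⟨hC, ih⟩

theorem exists_ofFn_eq {n : ℕ} {l : List α} (h : l.length = n) :
    ∃ w : Fin n → α, List.ofFn w = l := by
  subst h; exact ⟨l.get, List.ofFn_get l⟩

variable [DecidableEq α] [DecidableEq β]

def transCount : List α → α → α → ℕ
  | x :: y :: l, a, b => (if x = a ∧ y = b then 1 else 0) + transCount (y :: l) a b
  | _, _, _ => 0

@[simp] theorem transCount_nil (a b : α) : [].transCount a b = 0 := rfl

@[simp] theorem transCount_singleton (x a b : α) : [x].transCount a b = 0 := rfl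

@[simp] theorem transCount_cons_cons (x y : α) (l : List α) (a b : α) :
    (x :: y :: l).transCount a b = (if x = a ∧ y = b then 1 else 0) + (y :: l).transCount a b :=
  rfl

theorem transCount_eq_sum (l : List α) (a b : α) :
    l.transCount a b = ∑ t ∈ Finset.range (l.length - 1),
      if l[t]? = some a ∧ l[t + 1]? = some b then 1 else 0 := by
  induction l with
  | nil => simp
  | cons x l ih =>
    cases l with
    | nil => simp
    | cons y l =>
      rw [transCount_cons_cons, ih]
      simp [Finset.sum_range_succ' _ (l.length), add_comm]

theorem transCount_map_equiv (σ : α ≃ β) (l : List α) (a b : β) :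
    (l.map σ).transCount a b = l.transCount (σ.symm a) (σ.symm b) := by
  induction l with
  | nil => rfl
  | cons x l ih =>
    cases l with
    | nil => rfl
    | cons y l => simp_all [← Equiv.eq_symm_apply]

theorem transCount_self_of_isChain {l : List α} (hl : l.IsChain (· ≠ ·)) (a : α) :
    l.transCount a a = 0 := by
  induction l with
  | nil => rfl
  | cons x l ih =>
    cases l with
    | nil => rfl
    | cons y l =>
      obtain ⟨hxy, hl⟩ := isChain_cons_cons.mp hl
      grind [transCount_cons_cons]

theorem sum_transCount_left [Fintype α] (l : List α) (a : α) :
    ∑ b, l.transCount a b = l.dropLast.count a := by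
  induction l with
  | nil => simp
  | cons x l ih =>
    cases l with
    | nil => simp
    | cons y l => simp [Finset.sum_add_distrib, ih, count_cons, ite_and, add_comm]

theorem sum_transCount_right_add [Fintype α] {l : List α} {s : α} (hs : l.head? = some s)
    (a : α) : ∑ b, l.transCount b a + (if s = a then 1 else 0) = l.count a := by
  obtain ⟨l, rfl⟩ := head?_eq_some_iff.mp hs
  induction l generalizing s with
  | nil => simp [count_singleton]
  | cons y l ih =>
    have := ih (s := y) rfl
    simp only [count_cons, beq_iff_eq, transCount_cons_cons, ite_and, Finset.sum_add_distrib,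
      Finset.sum_ite_eq, Finset.mem_univ, ↓reduceIte] at this ⊢
    omega

theorem sum_transCount [Fintype α] (l : List α) :
    ∑ p : α × α, l.transCount p.1 p.2 = l.length - 1 := by
  have := Multiset.sum_count_eq_card (s := Finset.univ) (m := (l.dropLast : Multiset α)) (by simp)
  simpa [Fintype.sum_prod_type, sum_transCount_left] using this

theorem transCount_append_cons (l₁ : List α) (y : α) (l₂ : List α) (a b : α) :
    (l₁ ++ y :: l₂).transCount a b = (l₁ ++ [y]).transCount a b + (y :: l₂).transCount a b := by
  induction l₁ with
  | nil => simp
  | cons x l₁ ih =>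
    cases l₁ with
    | nil => simp
    | cons z l₁ => simp only [cons_append, transCount_cons_cons] at ih ⊢; rw [ih, add_assoc]

theorem transCount_flatten_replicate_append {v : α} {C l : List α} (hl : l.head? = some v)
    (n : ℕ) (a b : α) :
    ((replicate n (v :: C)).flatten ++ l).transCount a b =
      n * (v :: C ++ [v]).transCount a b + l.transCount a b := by
  induction n with
  | zero => simp
  | succ n ih =>
    obtain ⟨l', hl'⟩ := head?_eq_some_iff.mp (head?_flatten_replicate_append (C := C) hl n)
    rw [replicate_succ, flatten_cons, append_assoc, hl', transCount_append_cons, ← hl', ih]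
    ring

end List

def IsUnitFlow {α : Type*} [Fintype α] [DecidableEq α] (f : α → α → ℕ) (s e : α) : Prop :=
  ∀ v, ∑ b, f v b + (if e = v then 1 else 0) = ∑ b, f b v + (if s = v then 1 else 0)

theorem List.exists_isUnitFlow_transCount {α : Type*} [Fintype α] [DecidableEq α]
    {l : List α} (hl : l ≠ []) : ∃ s e, IsUnitFlow l.transCount s e := by
  obtain ⟨s, hs⟩ := Option.ne_none_iff_exists'.mp (mt List.head?_eq_none_iff.mp hl)
  obtain ⟨e, he⟩ := Option.ne_none_iff_exists'.mp (mt List.getLast?_eq_none_iff.mp hl)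
  refine ⟨s, e, fun v => ?_⟩
  rw [sum_transCount_right_add hs, sum_transCount_left]
  conv_rhs => rw [← dropLast_append_getLast? e he]
  simp [count_append, count_singleton]

def orientedCounts (A B M M' : ℕ) : Fin 3 → Fin 3 → ℕ :=
  ![![0, A, 0], ![B, 0, M], ![M', 0, 0]]

theorem isUnitFlow_orientedCounts_iff {s e : Fin 3} {A B M M' : ℕ} :
    IsUnitFlow (orientedCounts A B M M') s e ↔
      A + (if e = 0 then 1 else 0) = B + M' + (if s = 0 then 1 else 0) ∧
      B + M + (if e = 1 then 1 else 0) = A + (if s = 1 then 1 else 0) ∧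
      M' + (if e = 2 then 1 else 0) = M + (if s = 2 then 1 else 0) := by
  simp [IsUnitFlow, Fin.forall_fin_succ, Fin.sum_univ_three, orientedCounts, add_comm]

def cycleWord (pre : List (Fin 3)) (n c : ℕ) (suf : List (Fin 3)) : List (Fin 3) :=
  pre ++ ((List.replicate n [0, 1, 2]).flatten ++ ((List.replicate c [0, 1]).flatten ++ 0 :: suf))

theorem head?_cycles_append (n c : ℕ) (suf : List (Fin 3)) :
    ((List.replicate n [0, 1, 2]).flatten ++
      ((List.replicate c [0, 1]).flatten ++ 0 :: suf)).head? = some 0 :=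
  List.head?_flatten_replicate_append (List.head?_flatten_replicate_append rfl c) n

theorem isChain_cycleWord {pre suf : List (Fin 3)} (hpre : (pre ++ [0]).IsChain (· ≠ ·))
    (hsuf : (0 :: suf).IsChain (· ≠ ·)) (n c : ℕ) : (cycleWord pre n c suf).IsChain (· ≠ ·) := by
  have h₂ := List.isChain_flatten_replicate_append (by decide) hsuf rfl c (C := [1])
  have h₃ := List.isChain_flatten_replicate_append (by decide) h₂
    (List.head?_flatten_replicate_append rfl c) n (C := [1, 2])
  obtain ⟨l, hl⟩ := List.head?_eq_some_iff.mp (head?_cycles_append n c suf)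
  rw [cycleWord, hl, List.isChain_split, ← hl]
  exact ⟨hpre, h₃⟩

theorem transCount_cycleWord (pre : List (Fin 3)) (n c : ℕ) (suf : List (Fin 3)) (a b : Fin 3) :
    (cycleWord pre n c suf).transCount a b =
      (pre ++ [0]).transCount a b + n * orientedCounts 1 0 1 1 a b +
        c * orientedCounts 1 1 0 0 a b + (0 :: suf).transCount a b := by
  obtain ⟨l, hl⟩ := List.head?_eq_some_iff.mp (head?_cycles_append n c suf)
  rw [cycleWord, hl, List.transCount_append_cons, ← hl,
    List.transCount_flatten_replicate_append (List.head?_flatten_replicate_append rfl c),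
    List.transCount_flatten_replicate_append rfl]
  have h₃ : ([0, 1, 2, 0] : List (Fin 3)).transCount a b = orientedCounts 1 0 1 1 a b := by
    fin_cases a <;> fin_cases b <;> rfl
  have h₂ : ([0, 1, 0] : List (Fin 3)).transCount a b = orientedCounts 1 1 0 0 a b := by
    fin_cases a <;> fin_cases b <;> rfl
  simp only [List.cons_append, List.nil_append, h₃, h₂]
  ring

theorem length_eq_of_transCount_eq_orientedCounts {l : List (Fin 3)} (hne : l ≠ [])
    {A B M M' : ℕ} (h : l.transCount = orientedCounts A B M M') :
    l.length = A + B + M + M' + 1 := by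
  have hsum := List.sum_transCount l
  have hpos := List.length_pos_of_ne_nil hne
  simp only [h, orientedCounts, Fintype.sum_prod_type, Fin.sum_univ_three, Fin.isValue,
    Matrix.cons_val_zero, Matrix.cons_val_one, Matrix.cons_val, zero_add, add_zero] at hsum
  omega

theorem exists_isChain_transCount_eq_orientedCounts {s e : Fin 3} {A B M M' : ℕ}
    (hflow : IsUnitFlow (orientedCounts A B M M') s e) (hA : 1 ≤ A) :
    ∃ l : List (Fin 3), l.IsChain (· ≠ ·) ∧ l.length = A + B + M + M' + 1 ∧
      l.transCount = orientedCounts A B M M' := by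
  -- A short walk from `s` through `0` to `e` (`pre ++ [0]`, then `0 :: suf`) with `n` 3-cycles
  -- and `c` 2-cycles spliced in at `0`; from `1` the walk reaches `0` directly when `1 → 0` is
  -- used at all, and through `2` otherwise.
  suffices h : ∃ (pre suf : List (Fin 3)) (x y z w n c : ℕ), (pre ++ [0]).IsChain (· ≠ ·) ∧
      (0 :: suf).IsChain (· ≠ ·) ∧
      (pre ++ [0]).transCount + (0 :: suf).transCount = orientedCounts x y z w ∧
      A = x + n + c ∧ B = y + c ∧ M = z + n ∧ M' = w + n by
    obtain ⟨pre, suf, x, y, z, w, n, c, hpre, hsuf, hbase, hA, hB, hM, hM'⟩ := h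
    have htc : (cycleWord pre n c suf).transCount = orientedCounts A B M M' := by
      funext a b
      have := congrFun₂ hbase a b
      rw [transCount_cycleWord]
      fin_cases a <;> fin_cases b <;> simp [orientedCounts] at this ⊢ <;> omega
    exact ⟨_, isChain_cycleWord hpre hsuf n c,
      length_eq_of_transCount_eq_orientedCounts (by simp [cycleWord]) htc, htc⟩
  rw [isUnitFlow_orientedCounts_iff] at hflow
  fin_cases s <;> fin_cases e <;>
    simp only [Fin.zero_eta, Fin.mk_one, Fin.reduceFinMk, Fin.isValue, Fin.reduceEq, one_ne_zero,
      zero_ne_one, ↓reduceIte, add_zero] at hflow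
  · exact ⟨[], [], 0, 0, 0, 0, M, B, by decide, by decide, by decide, by omega⟩
  · exact ⟨[], [1], 1, 0, 0, 0, M, B, by decide, by decide, by decide, by omega⟩
  · exact ⟨[], [1, 2], 1, 0, 1, 0, M', B, by decide, by decide, by decide, by omega⟩
  · rcases Nat.eq_zero_or_pos B with hB | hB
    · exact ⟨[1, 2], [], 0, 0, 1, 1, M' - 1, 0, by decide, by decide, by decide, by omega⟩
    · exact ⟨[1], [], 0, 1, 0, 0, M, B - 1, by decide, by decide, by decide, by omega⟩
  · exact ⟨[], [], 0, 0, 0, 0, M, B, by decide, by decide, by decide, by omega⟩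
  · rcases Nat.eq_zero_or_pos B with hB | hB
    · exact ⟨[1, 2], [1, 2], 1, 0, 2, 1, M' - 1, 0, by decide, by decide, by decide, by omega⟩
    · exact ⟨[1], [1, 2], 1, 1, 1, 0, M', B - 1, by decide, by decide, by decide, by omega⟩
  · exact ⟨[2], [], 0, 0, 0, 1, M, B, by decide, by decide, by decide, by omega⟩
  · exact ⟨[2], [1], 1, 0, 0, 1, M, B, by decide, by decide, by decide, by omega⟩
  · exact ⟨[], [], 0, 0, 0, 0, M, B, by decide, by decide, by decide, by omega⟩

theorem transCount_eq_orientedCounts {l : List (Fin 3)} (hl : l.IsChain (· ≠ ·))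
    (h02 : l.transCount 0 2 = 0) (h21 : l.transCount 2 1 = 0) :
    l.transCount = orientedCounts (l.transCount 0 1) (l.transCount 1 0) (l.transCount 1 2)
      (l.transCount 2 0) := by
  funext a b
  fin_cases a <;> fin_cases b <;> simp [orientedCounts, List.transCount_self_of_isChain hl, *]

def IsMidpointOfChains {α : Type*} [DecidableEq α] (L : List α) : Prop :=
  ∃ L₁ L₂ : List α, L₁.IsChain (· ≠ ·) ∧ L₂.IsChain (· ≠ ·) ∧
    L₁.length = L.length ∧ L₂.length = L.length ∧ L₁.transCount ≠ L.transCount ∧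
    ∀ a b, L₁.transCount a b + L₂.transCount a b = 2 * L.transCount a b

theorem IsMidpointOfChains.map {α β : Type*} [DecidableEq α] [DecidableEq β] {L : List α}
    (h : IsMidpointOfChains L) (σ : α ≃ β) : IsMidpointOfChains (L.map σ) := by
  obtain ⟨L₁, L₂, hL₁, hL₂, hlen₁, hlen₂, hne, hsum⟩ := h
  refine ⟨L₁.map σ, L₂.map σ, ?_, ?_, by simpa, by simpa, fun h => hne ?_, fun a b => ?_⟩
  · simpa [List.isChain_map] using hL₁
  · simpa [List.isChain_map] using hL₂
  · funext a b
    simpa [List.transCount_map_equiv] using congrFun₂ h (σ a) (σ b)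
  · simp [List.transCount_map_equiv, hsum]

theorem isMidpointOfChains_of_transCount_eq_orientedCounts {L : List (Fin 3)} (hne : L ≠ [])
    {a b m m' : ℕ} (hcount : L.transCount = orientedCounts a b m m')
    (ha : 2 ≤ a) (hb : 3 ≤ b) (hm : 2 ≤ m) (hm' : 2 ≤ m') : IsMidpointOfChains L := by
  obtain ⟨s, e, hflow⟩ := List.exists_isUnitFlow_transCount hne
  rw [hcount, isUnitFlow_orientedCounts_iff] at hflow
  -- The trade shifts the counts by `±(1, 3, -2, -2)`, a circulation, so both new count vectors
  -- still obey the flow law from `s` to `e`.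
  obtain ⟨L₁, hL₁, hlen₁, hc₁⟩ := exists_isChain_transCount_eq_orientedCounts (s := s) (e := e)
    (A := a + 1) (B := b + 3) (M := m - 2) (M' := m' - 2)
    (by rw [isUnitFlow_orientedCounts_iff]; omega) (by omega)
  obtain ⟨L₂, hL₂, hlen₂, hc₂⟩ := exists_isChain_transCount_eq_orientedCounts (s := s) (e := e)
    (A := a - 1) (B := b - 3) (M := m + 2) (M' := m' + 2)
    (by rw [isUnitFlow_orientedCounts_iff]; omega) (by omega)
  have hlen := length_eq_of_transCount_eq_orientedCounts hne hcount
  refine ⟨L₁, L₂, hL₁, hL₂, by omega, by omega, fun h => ?_, fun x y => ?_⟩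
  · simpa [hc₁, hcount, orientedCounts] using congrFun₂ h 1 0
  · rw [hc₁, hc₂, hcount]
    fin_cases x <;> fin_cases y <;> simp [orientedCounts] <;> omega

theorem isMidpointOfChains_of_min_transCount_zero_one {L : List (Fin 3)} (hL : L.IsChain (· ≠ ·))
    (h02 : min (L.transCount 0 2) (L.transCount 2 0) = 0)
    (h12 : min (L.transCount 1 2) (L.transCount 2 1) = 0)
    (hq : 3 ≤ min (L.transCount 0 1) (L.transCount 1 0))
    (hlen : 2 * min (L.transCount 0 1) (L.transCount 1 0) + 7 ≤ L.length) :
    IsMidpointOfChains L := by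
  have hne : L ≠ [] := by rintro rfl; simp at hlen
  obtain ⟨s, e, hflow⟩ := List.exists_isUnitFlow_transCount hne
  have h0 := hflow 0
  have h1 := hflow 1
  have hsum := List.sum_transCount L
  simp only [Fin.sum_univ_three, Fintype.sum_prod_type, List.transCount_self_of_isChain hL]
    at h0 h1 hsum
  have hpos := List.length_pos_of_ne_nil hne
  have hs₁ : (if s = 0 then 1 else 0) + (if s = 1 then 1 else 0) +
      (if s = 2 then 1 else 0) = 1 := by
    fin_cases s <;> rfl
  have he₁ : (if e = 0 then 1 else 0) + (if e = 1 then 1 else 0) +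
      (if e = 2 then 1 else 0) = 1 := by
    fin_cases e <;> rfl
  -- The length bound rules out that vertex `2` is never entered or never left.
  rcases Nat.min_eq_zero_iff.mp h02 with h02 | h20 <;>
    rcases Nat.min_eq_zero_iff.mp h12 with h12 | h21
  · omega
  · exact isMidpointOfChains_of_transCount_eq_orientedCounts hne
      (transCount_eq_orientedCounts hL h02 h21) (by omega) (by omega) (by omega) (by omega)
  · set τ := Equiv.swap (0 : Fin 3) 1
    have hτ2 : τ 2 = 2 := Equiv.swap_apply_of_ne_of_ne (by decide) (by decide)
    have hτ : ∀ a b, (L.map τ).transCount a b = L.transCount (τ a) (τ b) := by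
      simp [List.transCount_map_equiv, τ]
    have hLτ : (L.map τ).IsChain (· ≠ ·) := by simpa [List.isChain_map] using hL
    have hcount := transCount_eq_orientedCounts hLτ (by simpa [hτ, hτ2, τ] using h12)
      (by simpa [hτ, hτ2, τ] using h20)
    simp only [hτ, hτ2, τ, Equiv.swap_apply_left, Equiv.swap_apply_right] at hcount
    have := isMidpointOfChains_of_transCount_eq_orientedCounts (by simpa using hne) hcount
      (by omega) (by omega) (by omega) (by omega)
    simpa [τ, Function.comp_def] using this.map τ
  · omega

theorem Fin.exists_perm_apply_eq_zero_one {n : ℕ} {i j : Fin (n + 2)} (hij : i ≠ j) :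
    ∃ σ : Equiv.Perm (Fin (n + 2)), σ i = 0 ∧ σ j = 1 := by
  have hj : Equiv.swap i 0 j ≠ 0 := by
    rw [Ne, Equiv.swap_apply_eq_iff, Equiv.swap_apply_right]; exact hij.symm
  refine ⟨Equiv.swap (Equiv.swap i 0 j) 1 * Equiv.swap i 0, ?_, ?_⟩
  · simp [Equiv.swap_apply_of_ne_of_ne hj.symm Fin.zero_ne_one]
  · simp

theorem isMidpointOfChains_of_min_transCount {L : List (Fin 3)} (hL : L.IsChain (· ≠ ·))
    {i j : Fin 3} (hij : i ≠ j)
    (hone : ∀ a b, a ≠ b → ({a, b} : Finset (Fin 3)) ≠ {i, j} →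
      min (L.transCount a b) (L.transCount b a) = 0)
    (hq : 3 ≤ min (L.transCount i j) (L.transCount j i))
    (hlen : 2 * min (L.transCount i j) (L.transCount j i) + 7 ≤ L.length) :
    IsMidpointOfChains L := by
  obtain ⟨σ, hσi, hσj⟩ := Fin.exists_perm_apply_eq_zero_one (n := 1) hij
  set k := σ.symm 2
  have hσk : σ k = 2 := σ.apply_symm_apply 2
  have hik : i ≠ k := fun h => by simp [← h, hσi] at hσk
  have hjk : j ≠ k := fun h => by simp [← h, hσj] at hσk
  have hσL : ∀ a b, (L.map σ).transCount (σ a) (σ b) = L.transCount a b := by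
    simp only [List.transCount_map_equiv, Equiv.symm_apply_apply, implies_true]
  have hmid : IsMidpointOfChains (L.map σ) := by
    refine isMidpointOfChains_of_min_transCount_zero_one ?_ ?_ ?_ ?_ ?_
    · simpa only [List.isChain_map, σ.injective.ne_iff] using hL
    · rw [← hσi, ← hσk, hσL, hσL]
      refine hone i k hik fun h => ?_
      have hj : j ∈ ({i, k} : Finset (Fin 3)) := h ▸ by simp
      simp [hij.symm, hjk] at hj
    · rw [← hσj, ← hσk, hσL, hσL]
      refine hone j k hjk fun h => ?_
      have hi : i ∈ ({j, k} : Finset (Fin 3)) := h ▸ by simp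
      simp [hij, hik] at hi
    · rwa [← hσi, ← hσj, hσL, hσL]
    · rwa [← hσi, ← hσj, hσL, hσL, List.length_map]
  simpa [Function.comp_def] using hmid.map σ.symm

theorem trCount_eq_transCount {S T : ℕ} (w : Fin T → Fin S) (a b : Fin S) :
    trCount S T w (a, b) = (List.ofFn w).transCount a b := by
  rw [trCount, Finset.card_filter, List.transCount_eq_sum, List.length_ofFn,
    ← Fin.sum_univ_eq_sum_range]
  refine Finset.sum_congr rfl fun t _ => ?_
  have := t.2
  simp [show t.1 < T by omega, show t.1 + 1 < T by omega]

theorem noLoop_iff_isChain {S T : ℕ} (w : Fin T → Fin S) :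
    NoLoop S T w ↔ (List.ofFn w).IsChain (· ≠ ·) := by
  rw [List.isChain_iff_getElem, NoLoop]
  simp only [List.length_ofFn, List.getElem_ofFn]
  exact ⟨fun h t ht => h ⟨t, by omega⟩, fun h t => h t.1 (by have := t.2; omega)⟩

theorem exists_noLoop_of_isMidpointOfChains {S T : ℕ} {u : Fin T → Fin S}
    (hu : NoLoop S T u) (h : IsMidpointOfChains (List.ofFn u)) :
    ∃ w₁ w₂ : Fin T → Fin S, NoLoop S T w₁ ∧ NoLoop S T w₂ ∧
      (fun p : {p : Fin S × Fin S // p.1 ≠ p.2} => trCount S T w₁ p.1) ≠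
        (fun p => trCount S T u p.1) ∧
      ∀ p, trCount S T w₁ p + trCount S T w₂ p = 2 * trCount S T u p := by
  obtain ⟨L₁, L₂, hL₁, hL₂, hlen₁, hlen₂, hne, hsum⟩ := h
  obtain ⟨w₁, rfl⟩ := List.exists_ofFn_eq (hlen₁.trans List.length_ofFn)
  obtain ⟨w₂, rfl⟩ := List.exists_ofFn_eq (hlen₂.trans List.length_ofFn)
  refine ⟨w₁, w₂, (noLoop_iff_isChain w₁).mpr hL₁, (noLoop_iff_isChain w₂).mpr hL₂,
    fun h => hne (funext₂ fun a b => ?_), fun ⟨a, b⟩ => by simp only [trCount_eq_transCount, hsum]⟩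
  rcases eq_or_ne a b with rfl | hab
  · rw [List.transCount_self_of_isChain hL₁,
      List.transCount_self_of_isChain ((noLoop_iff_isChain u).mp hu)]
  · simpa [trCount_eq_transCount] using congrFun h ⟨(a, b), hab⟩

theorem exists_midpoint_and_notMem_extremePoints {ι : Type*} {P : Set (ι → ℝ)}
    {x y z : ι → ℕ} (hy : (fun p => (y p : ℝ)) ∈ P) (hz : (fun p => (z p : ℝ)) ∈ P)
    (hyx : y ≠ x) (hsum : ∀ p, y p + z p = 2 * x p) :
    (∃ y' z' : ι → ℝ, y' ∈ P ∧ z' ∈ P ∧ y' ≠ (fun p => (x p : ℝ)) ∧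
      z' ≠ (fun p => (x p : ℝ)) ∧ ∀ p, (x p : ℝ) = (1 / 2) * y' p + (1 / 2) * z' p) ∧
    (fun p => (x p : ℝ)) ∉ Set.extremePoints ℝ P := by
  have hmid : ∀ p, (x p : ℝ) = (1 / 2) * y p + (1 / 2) * z p := fun p => by
    have : (y p : ℝ) + z p = 2 * x p := by exact_mod_cast hsum p
    linarith
  have hyx' : (fun p => (y p : ℝ)) ≠ (fun p => (x p : ℝ)) := fun h =>
    hyx (funext fun p => by exact_mod_cast congrFun h p)
  have hzx' : (fun p => (z p : ℝ)) ≠ (fun p => (x p : ℝ)) := fun h =>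
    hyx' (funext fun p => by linarith [hmid p, congrFun h p])
  refine ⟨⟨_, _, hy, hz, hyx', hzx', hmid⟩, fun hext => hyx' (hext.2 hy hz ?_)⟩
  refine ⟨1 / 2, 1 / 2, by norm_num, by norm_num, by norm_num, funext fun p => ?_⟩
  simp [hmid p]

theorem stmt17_general (T : ℕ)
    (q : ℕ) (hq3 : 3 ≤ q) (hqp : q ≤ (T - 1) / 2 - 3)
    (u : Fin T → Fin 3) (hu : NoLoop 3 T u)
    (x : {p : Fin 3 × Fin 3 // p.1 ≠ p.2} → ℕ)
    (hx : ∀ p, x p = trCount 3 T u p.1)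
    (i j : Fin 3) (hij : i ≠ j)
    (hq : min (x ⟨(i, j), hij⟩) (x ⟨(j, i), hij.symm⟩) = q)
    (hone : ∀ (a b : Fin 3) (hab : a ≠ b), ({a, b} : Finset (Fin 3)) ≠ {i, j} →
      min (x ⟨(a, b), hab⟩) (x ⟨(b, a), hab.symm⟩) = 0) :
    let P := convexHull ℝ (Set.range fun w : {w : Fin T → Fin 3 // NoLoop 3 T w} =>
      fun p : {p : Fin 3 × Fin 3 // p.1 ≠ p.2} => (trCount 3 T w.1 p.1 : ℝ));
    (∃ y z : {p : Fin 3 × Fin 3 // p.1 ≠ p.2} → ℝ,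
      y ∈ P ∧ z ∈ P ∧ y ≠ (fun p => (x p : ℝ)) ∧ z ≠ (fun p => (x p : ℝ)) ∧
      ∀ p, (x p : ℝ) = (1 / 2) * y p + (1 / 2) * z p) ∧
    (fun p => (x p : ℝ)) ∉ Set.extremePoints ℝ P := by
  intro P
  obtain rfl : x = fun p => trCount 3 T u p.1 := funext hx
  have hmid : IsMidpointOfChains (List.ofFn u) := by
    simp only [trCount_eq_transCount] at hq hone
    refine isMidpointOfChains_of_min_transCount ((noLoop_iff_isChain u).mp hu) hij
      (fun a b hab => hone a b hab) (hq ▸ hq3) ?_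
    rw [hq, List.length_ofFn]
    omega
  obtain ⟨w₁, w₂, hw₁, hw₂, hne, hsum⟩ := exists_noLoop_of_isMidpointOfChains hu hmid
  exact exists_midpoint_and_notMem_extremePoints (subset_convexHull ℝ _ ⟨⟨w₁, hw₁⟩, rfl⟩)
    (subset_convexHull ℝ _ ⟨⟨w₂, hw₂⟩, rfl⟩) hne (fun p => hsum p.1)

/-- For `T ≥ 13`, a transition-count vector `x` of a no-self-loop word over three states
whose state graph has exactly `q` 2-cycles, all on one pair of vertices, with
`3 ≤ q ≤ ⌊(T-1)/2⌋ - 3`, is the midpoint of two other points of the polytope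
`conv{A_w}` and hence is not a vertex (extreme point). -/
theorem stmt17 (T : ℕ) (hT : 13 ≤ T)
    (q : ℕ) (hq3 : 3 ≤ q) (hqp : q ≤ (T - 1) / 2 - 3)
    (u : Fin T → Fin 3) (hu : NoLoop 3 T u)
    (x : {p : Fin 3 × Fin 3 // p.1 ≠ p.2} → ℕ)
    (hx : ∀ p, x p = trCount 3 T u p.1)
    (i j : Fin 3) (hij : i ≠ j)
    (hq : min (x ⟨(i, j), hij⟩) (x ⟨(j, i), hij.symm⟩) = q)
    (hone : ∀ (a b : Fin 3) (hab : a ≠ b), ({a, b} : Finset (Fin 3)) ≠ {i, j} →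
      min (x ⟨(a, b), hab⟩) (x ⟨(b, a), hab.symm⟩) = 0) :
    let P := convexHull ℝ (Set.range fun w : {w : Fin T → Fin 3 // NoLoop 3 T w} =>
      fun p : {p : Fin 3 × Fin 3 // p.1 ≠ p.2} => (trCount 3 T w.1 p.1 : ℝ));
    (∃ y z : {p : Fin 3 × Fin 3 // p.1 ≠ p.2} → ℝ,
      y ∈ P ∧ z ∈ P ∧ y ≠ (fun p => (x p : ℝ)) ∧ z ≠ (fun p => (x p : ℝ)) ∧
      ∀ p, (x p : ℝ) = (1 / 2) * y p + (1 / 2) * z p) ∧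
    (fun p => (x p : ℝ)) ∉ Set.extremePoints ℝ P :=
  stmt17_general T q hq3 hqp u hu x hx i j hij hq hone
end
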